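/- arXiv:math/0508429 — 10 statements merged into one kernel-verified Lean document; each statement's English description precedes it below -/
import Mathlib

section
/- Let x ∈ (0,1] be a real number such that 1 + (m−1)x − ⌈mx⌉ ≥ 0 for every integer m. Then x = 1/q for some positive integer q. -/
/-- Let x ∈ (0,1] be a real number such that
1 + (m−1)x − ⌈mx⌉ ≥ 0 for every integer m. Then x = 1/q for some positive integer q. -/
theorem toric_mld_stmt0 (x : ℝ) (hx : x ∈ Set.Ioc (0:ℝ) 1)
    (h : ∀ m : ℤ, 0 ≤ 1 + ((m:ℝ) - 1) * x - (⌈(m:ℝ) * x⌉ : ℝ)) :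
    ∃ q : ℕ, 0 < q ∧ x = 1 / q := by
  obtain ⟨hx0, hx1⟩ := hx
  set q : ℤ := ⌈1 / x⌉ with hq
  have hinv1 : (1:ℝ) ≤ 1 / x := by
    rw [le_div_iff₀ hx0]; linarith
  have hq1 : 1 ≤ q := Int.one_le_ceil_iff.mpr (by positivity)
  have hqx1 : 1 ≤ (q:ℝ) * x := by
    have := Int.le_ceil (1/x)
    rw [div_le_iff₀ hx0] at this
    linarith [this]
  have hlt : ((q:ℝ) - 1) * x < 1 := by
    have h2 : ((q:ℝ) - 1) < 1 / x := by
      by_contra hcon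
      push_neg at hcon
      have : q - 1 ≥ ⌈1/x⌉ := Int.ceil_le.mpr (by exact_mod_cast hcon)
      omega
    calc ((q:ℝ) - 1) * x < (1/x) * x := by
          apply mul_lt_mul_of_pos_right h2 hx0
      _ = 1 := by field_simp
  -- show q * x = 1
  have heq : (q:ℝ) * x = 1 := by
    by_contra hne
    have hgt : 1 < (q:ℝ) * x := lt_of_le_of_ne hqx1 (Ne.symm hne)
    have hc2 : (2:ℝ) ≤ (⌈(q:ℝ) * x⌉ : ℝ) := by
      have : (1:ℤ) < ⌈(q:ℝ) * x⌉ := by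
        rw [Int.lt_ceil]; exact_mod_cast hgt
      exact_mod_cast this
    have := h q
    have hxx : (q:ℝ) * x = ((q:ℝ) - 1) * x + x := by ring
    nlinarith
  refine ⟨q.toNat, ?_, ?_⟩
  · omega
  · have hc : ((q.toNat : ℝ)) = (q:ℝ) := by
      exact_mod_cast congrArg (fun n : ℤ => (n : ℝ)) (Int.toNat_of_nonneg (by omega : 0 ≤ q))
    rw [hc, eq_div_iff (by positivity : (q:ℝ) ≠ 0)]
    linarith [heq]
end

section
/- Let A ⊆ [0,1] with 1 ∈ A. If 0 ∈ A, then Ṽ_1(A) = ((0,1] × {0}) ∪ ({1/n : n ≥ 1} × A); if 0 ∉ A, then Ṽ_1(A) = {1/n : n ≥ 1} × A. -/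
open Finset in
/-- `Vtilde d A` is the set of pairs `(x,a) ∈ (0,1]^d × A^d` such that
`∑ i, (1 + (m-1) x_i - ⌈m x_i⌉) a_i ≥ 0` for every integer `m`. -/
def Vtilde (d : ℕ) (A : Set ℝ) : Set ((Fin d → ℝ) × (Fin d → ℝ)) :=
  {p | (∀ i, p.1 i ∈ Set.Ioc (0:ℝ) 1) ∧ (∀ i, p.2 i ∈ A) ∧
    ∀ m : ℤ, 0 ≤ ∑ i, (1 + ((m:ℝ) - 1) * p.1 i - (⌈(m:ℝ) * p.1 i⌉ : ℝ)) * p.2 i}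

lemma vtilde_mem_iff (A : Set ℝ) (p : (Fin 1 → ℝ) × (Fin 1 → ℝ)) :
    p ∈ Vtilde 1 A ↔ (p.1 0 ∈ Set.Ioc (0:ℝ) 1 ∧ p.2 0 ∈ A ∧
      ∀ m : ℤ, 0 ≤ (1 + ((m:ℝ)-1)*p.1 0 - (⌈(m:ℝ)*p.1 0⌉:ℝ)) * p.2 0) := by
  constructor
  · rintro ⟨hx, ha, hs⟩
    exact ⟨hx 0, ha 0, fun m => by simpa [Fin.sum_univ_one] using hs m⟩
  · rintro ⟨hx, ha, hs⟩
    refine ⟨fun i => ?_, fun i => ?_, fun m => by simpa [Fin.sum_univ_one] using hs m⟩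
    · have : i = 0 := Subsingleton.elim _ _
      rw [this]; exact hx
    · have : i = 0 := Subsingleton.elim _ _
      rw [this]; exact ha

lemma ceil_le_aux (n : ℕ) (hn : 0 < n) (m : ℤ) :
    (⌈(m:ℝ) / n⌉ : ℝ) ≤ 1 + ((m:ℝ) - 1) / n := by
  have hn' : (0:ℝ) < n := by positivity
  have h1 : (⌈(m:ℝ)/n⌉ : ℝ) < (m:ℝ)/n + 1 := Int.ceil_lt_add_one _
  have h2 : (n:ℝ) * (⌈(m:ℝ)/n⌉ : ℝ) < (m:ℝ) + n := by
    have : (n:ℝ) * ((m:ℝ)/n + 1) = (m:ℝ) + n := by field_simp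
    nlinarith
  have h3 : (n:ℤ) * ⌈(m:ℝ)/n⌉ < m + n := by exact_mod_cast h2
  have h4 : (n:ℤ) * ⌈(m:ℝ)/n⌉ ≤ m + n - 1 := by omega
  have h5 : (n:ℝ) * (⌈(m:ℝ)/n⌉ : ℝ) ≤ (m:ℝ) + n - 1 := by exact_mod_cast h4
  have heq : 1 + ((m:ℝ)-1)/n = ((m:ℝ) + n - 1)/n := by field_simp; ring
  rw [heq, le_div_iff₀ hn']
  nlinarith

lemma nonneg_of_inv (n : ℕ) (hn : 0 < n) (m : ℤ) :
    0 ≤ 1 + ((m:ℝ)-1)*(1/(n:ℝ)) - (⌈(m:ℝ)*(1/(n:ℝ))⌉:ℝ) := by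
  have h := ceil_le_aux n hn m
  rw [mul_one_div, mul_one_div]
  linarith [h, (by ring : ((m:ℝ)-1)/n = (m:ℝ)/n - 1/n)]

lemma x_eq_inv (x : ℝ) (hx0 : 0 < x) (hx1 : x ≤ 1)
    (h : ∀ m : ℤ, 0 ≤ 1 + ((m:ℝ)-1)*x - (⌈(m:ℝ)*x⌉:ℝ)) :
    ∃ n : ℕ, 0 < n ∧ x = 1 / n := by
  set n : ℤ := ⌈1/x⌉ with hn
  have hn1 : (1:ℤ) ≤ n := Int.one_le_ceil_iff.2 (by positivity)
  have hle : (1:ℝ)/x ≤ (n:ℝ) := Int.le_ceil _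
  have hnx1 : (1:ℝ) ≤ (n:ℝ) * x := by
    have : (1/x) * x ≤ (n:ℝ) * x := by nlinarith
    rw [one_div_mul_cancel (ne_of_gt hx0)] at this
    exact this
  have hlt : ((n:ℝ) - 1) * x < 1 := by
    have h2 : (n:ℝ) < 1/x + 1 := Int.ceil_lt_add_one _
    have : (1/x) * x = 1 := one_div_mul_cancel (ne_of_gt hx0)
    nlinarith
  have hf := h n
  have hceil_ge : (n:ℝ) * x ≤ (⌈(n:ℝ)*x⌉:ℝ) := Int.le_ceil _
  have hc2 : (⌈(n:ℝ)*x⌉:ℝ) < 2 := by nlinarith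
  have hc2' : ⌈(n:ℝ)*x⌉ < (2:ℤ) := by exact_mod_cast hc2
  have hc1 : (1:ℤ) ≤ ⌈(n:ℝ)*x⌉ := Int.one_le_ceil_iff.2 (by nlinarith)
  have hc : ⌈(n:ℝ)*x⌉ = 1 := by omega
  have hnx : (n:ℝ) * x = 1 := by
    have : (⌈(n:ℝ)*x⌉:ℝ) = 1 := by exact_mod_cast hc
    linarith [hceil_ge]
  refine ⟨n.toNat, by omega, ?_⟩
  have hcast : ((n.toNat : ℕ) : ℝ) = (n:ℝ) := by
    have := Int.toNat_of_nonneg (by omega : (0:ℤ) ≤ n)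
    exact_mod_cast congrArg (fun z : ℤ => (z:ℝ)) this
  rw [eq_div_iff (by rw [hcast]; positivity : ((n.toNat:ℕ):ℝ) ≠ 0), hcast]
  linarith [hnx]

/-- Ṽ₁(A) = ((0,1] × {0}) ∪ ({1/n : n ≥ 1} × A), the first term being
present exactly when 0 ∈ A. -/
theorem toric_mld_stmt1 (A : Set ℝ) (hA : A ⊆ Set.Icc 0 1) (h1 : (1:ℝ) ∈ A) :
    ((0:ℝ) ∈ A → Vtilde 1 A =
      {p : (Fin 1 → ℝ) × (Fin 1 → ℝ) | p.1 0 ∈ Set.Ioc (0:ℝ) 1 ∧ p.2 0 = 0} ∪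
      {p : (Fin 1 → ℝ) × (Fin 1 → ℝ) | (∃ n : ℕ, 0 < n ∧ p.1 0 = 1 / n) ∧ p.2 0 ∈ A}) ∧
    ((0:ℝ) ∉ A → Vtilde 1 A =
      {p : (Fin 1 → ℝ) × (Fin 1 → ℝ) | (∃ n : ℕ, 0 < n ∧ p.1 0 = 1 / n) ∧ p.2 0 ∈ A}) := by
  -- forward: membership implies a = 0 or x = 1/n
  have fwd : ∀ p ∈ Vtilde 1 A, p.1 0 ∈ Set.Ioc (0:ℝ) 1 ∧ p.2 0 ∈ A ∧
      (p.2 0 = 0 ∨ ∃ n : ℕ, 0 < n ∧ p.1 0 = 1 / n) := by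
    intro p hp
    rw [vtilde_mem_iff] at hp
    obtain ⟨hx, ha, hs⟩ := hp
    refine ⟨hx, ha, ?_⟩
    by_cases h0 : p.2 0 = 0
    · exact Or.inl h0
    · right
      have hapos : 0 < p.2 0 := lt_of_le_of_ne (hA ha).1 (Ne.symm h0)
      refine x_eq_inv (p.1 0) hx.1 hx.2 (fun m => ?_)
      nlinarith [hs m, hapos]
  -- backward: x = 1/n and a ∈ A implies membership
  have bwd : ∀ p : (Fin 1 → ℝ) × (Fin 1 → ℝ),
      (∃ n : ℕ, 0 < n ∧ p.1 0 = 1 / n) → p.2 0 ∈ A → p ∈ Vtilde 1 A := by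
    rintro p ⟨n, hn, hxn⟩ ha
    rw [vtilde_mem_iff]
    have hn' : (0:ℝ) < n := by positivity
    refine ⟨⟨by rw [hxn]; positivity, by rw [hxn]; rw [div_le_one hn']; exact_mod_cast hn⟩,
      ha, fun m => ?_⟩
    have := nonneg_of_inv n hn m
    rw [hxn]
    exact mul_nonneg this (hA ha).1
  -- backward for a = 0
  have bwd0 : ∀ p : (Fin 1 → ℝ) × (Fin 1 → ℝ),
      p.1 0 ∈ Set.Ioc (0:ℝ) 1 → p.2 0 = 0 → (0:ℝ) ∈ A → p ∈ Vtilde 1 A := by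
    intro p hx h0 hA0
    rw [vtilde_mem_iff]
    exact ⟨hx, by rw [h0]; exact hA0, fun m => by rw [h0]; simp⟩
  constructor
  · intro hA0
    ext p
    constructor
    · intro hp
      obtain ⟨hx, ha, hcase⟩ := fwd p hp
      rcases hcase with h0 | hinv
      · exact Or.inl ⟨hx, h0⟩
      · exact Or.inr ⟨hinv, ha⟩
    · rintro (⟨hx, h0⟩ | ⟨hinv, ha⟩)
      · exact bwd0 p hx h0 hA0
      · exact bwd p hinv ha
  · intro hA0
    ext p
    constructor
    · intro hp
      obtain ⟨hx, ha, hcase⟩ := fwd p hp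
      rcases hcase with h0 | hinv
      · exact absurd (h0 ▸ ha) hA0
      · exact ⟨hinv, ha⟩
    · rintro ⟨hinv, ha⟩
      exact bwd p hinv ha
end

section
/- Let A ⊆ [0,1] with 1 ∈ A. Then {x·a : (x,a) ∈ Ṽ_1(A)} = ∪_{n=1}^∞ (1/n)·A, where (1/n)·A = {a/n : a ∈ A}. -/
open Finset in
/-- {x·a : (x,a) ∈ Ṽ₁(A)} = ∪_{n≥1} (1/n)·A. -/
theorem toric_mld_stmt2 (A : Set ℝ) (hA : A ⊆ Set.Icc 0 1) (h1 : (1:ℝ) ∈ A) :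
    {r : ℝ | ∃ p ∈ Vtilde 1 A, r = ∑ i, p.1 i * p.2 i} =
    {r : ℝ | ∃ n : ℕ, 0 < n ∧ ∃ a ∈ A, r = a / n} := by
  ext r
  simp only [Set.mem_setOf_eq]
  constructor
  · rintro ⟨⟨x, a⟩, ⟨hx, ha, hm⟩, hr⟩
    simp only [Fin.sum_univ_one] at hr hm
    have hx0 := hx 0
    have ha0 := ha 0
    have ha0' := hA ha0
    rcases eq_or_lt_of_le ha0'.1 with h0 | h0
    · have h0' : a 0 = 0 := h0.symm
      exact ⟨1, one_pos, a 0, ha0, by rw [hr, h0']; simp⟩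
    · have hxpos : 0 < x 0 := hx0.1
      set n : ℤ := ⌈1 / x 0⌉ with hn
      have hd1 : (1:ℝ) ≤ 1 / x 0 := by
        rw [le_div_iff₀ hxpos]; linarith [hx0.2]
      have hceil := Int.le_ceil (1 / x 0)
      rw [← hn] at hceil
      have hn1 : 1 ≤ n := by
        have : (1:ℝ) ≤ (n:ℝ) := le_trans hd1 hceil
        exact_mod_cast this
      have hge : 1 ≤ (n:ℝ) * x 0 := by
        have h := mul_le_mul_of_nonneg_right hceil hxpos.le
        rw [div_mul_cancel₀ 1 hxpos.ne'] at h
        linarith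
      have hlt : ((n:ℝ) - 1) * x 0 < 1 := by
        have h := Int.ceil_lt_add_one (1 / x 0)
        rw [← hn] at h
        have : ((n:ℝ) - 1) < 1 / x 0 := by linarith
        calc ((n:ℝ) - 1) * x 0 < (1 / x 0) * x 0 := by
              exact mul_lt_mul_of_pos_right this hxpos
          _ = 1 := by field_simp
      have key := hm n
      have h2 : (⌈(n:ℝ) * x 0⌉ : ℝ) ≤ 1 + ((n:ℝ) - 1) * x 0 := by nlinarith
      have hle : (n:ℝ) * x 0 ≤ 1 := by
        by_contra h
        push_neg at h
        have h3 : (1:ℤ) < ⌈(n:ℝ) * x 0⌉ := by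
          rw [Int.lt_ceil]; exact_mod_cast h
        have h4 : (2:ℝ) ≤ (⌈(n:ℝ) * x 0⌉ : ℝ) := by exact_mod_cast h3
        linarith
      have hxeq : x 0 = 1 / (n:ℝ) := by
        have hnpos : (0:ℝ) < (n:ℝ) := by exact_mod_cast hn1
        have : (n:ℝ) * x 0 = 1 := le_antisymm hle hge
        field_simp
        linarith [this]
      refine ⟨n.toNat, by omega, a 0, ha0, ?_⟩
      rw [hr, hxeq]
      have : ((n.toNat : ℕ) : ℝ) = (n : ℝ) := by
        exact_mod_cast congrArg Int.cast (Int.toNat_of_nonneg (by omega))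
      rw [this]; ring
  · rintro ⟨n, hn, a, haA, hr⟩
    have hnpos : (0:ℝ) < (n:ℝ) := by exact_mod_cast hn
    have ha' := hA haA
    refine ⟨(fun _ => 1 / (n:ℝ), fun _ => a), ⟨?_, fun _ => haA, ?_⟩, ?_⟩
    · intro i
      constructor
      · positivity
      · rw [div_le_one hnpos]; exact_mod_cast hn
    · intro m
      simp only [Fin.sum_univ_one]
      have hkey : (⌈(m:ℝ) * (1 / (n:ℝ))⌉ : ℝ) ≤ 1 + ((m:ℝ) - 1) * (1 / (n:ℝ)) := by
        set k : ℤ := ⌈(m:ℝ) * (1 / (n:ℝ))⌉ with hk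
        have h1 : (k:ℝ) < (m:ℝ) * (1 / (n:ℝ)) + 1 := by
          rw [hk]; exact Int.ceil_lt_add_one _
        have h2 : (k:ℝ) * (n:ℝ) < (m:ℝ) + (n:ℝ) := by
          have := mul_lt_mul_of_pos_right h1 hnpos
          calc (k:ℝ) * (n:ℝ) < ((m:ℝ) * (1 / (n:ℝ)) + 1) * (n:ℝ) := this
            _ = (m:ℝ) + (n:ℝ) := by field_simp
        have h3 : k * (n:ℤ) < m + (n:ℤ) := by exact_mod_cast h2
        have h4 : k * (n:ℤ) ≤ m + (n:ℤ) - 1 := by omega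
        have h5 : (k:ℝ) * (n:ℝ) ≤ (m:ℝ) + (n:ℝ) - 1 := by exact_mod_cast h4
        rw [← sub_nonneg]
        have : 1 + ((m:ℝ) - 1) * (1 / (n:ℝ)) - (k:ℝ) =
            ((m:ℝ) + (n:ℝ) - 1 - (k:ℝ) * (n:ℝ)) / (n:ℝ) := by field_simp; ring
        rw [this]
        apply div_nonneg _ hnpos.le
        linarith
      exact mul_nonneg (by linarith) ha'.1
    · rw [hr, Fin.sum_univ_one]
      show a / (n:ℝ) = 1 / (n:ℝ) * a
      ring
end

section
/- Let T = ℝ^d/ℤ^d be the real d-dimensional torus and let U ⊆ T be an open subset. Then the collection of closed subgroups of T that do not intersect U has only finitely many maximal elements with respect to inclusion (i.e., the set of maximal elements of {H : H a closed subgroup of T, H ∩ U = ∅} ordered by inclusion is finite). -/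
/-!
Closed subgroups of `T` are compact, hence points of the compact space of nonempty compact subsets
of `T` with the Hausdorff metric; there they form a closed set, and so do those disjoint from the
open set `U`. Each closed subgroup `L` is isolated from below: for some `ε > 0`, every subgroup
lying within `ε` of `L` is contained in `L`. Indeed the preimage `V` of `L` in `ℝ^d` is the sum of
the largest linear subspace it contains and of a lattice in a complement, which has full rank
because `ℤ^d ⊆ V`; so `V = q⁻¹(ℤ^r)` for a linear map `q`, and a real number all of whose multiples
lie within `1/4` of `ℤ` is an integer. Infinitely many maximal closed subgroups disjoint from `U`
would accumulate at a closed subgroup disjoint from `U`; those close to it are contained in it,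
hence equal to it by maximality.
-/

open Filter Metric Topology TopologicalSpace

@[simp]
theorem UnitAddCircle.coe_intCast (m : ℤ) : ((m : ℝ) : UnitAddCircle) = 0 :=
  (AddCircle.coe_eq_zero_iff 1).2 ⟨m, by simp⟩

theorem UnitAddCircle.eq_zero_of_forall_norm_nsmul_lt {x : UnitAddCircle}
    (h : ∀ n : ℕ, ‖n • x‖ < 1 / 4) : x = 0 := by
  obtain ⟨s, rfl⟩ := QuotientAddGroup.mk_surjective x
  set β := s - round s with hβ_def
  have hsβ : (s : UnitAddCircle) = β := by simp [hβ_def]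
  have hnorm : ∀ n : ℕ, n * |β| ≤ 1 / 2 → ‖n • (s : UnitAddCircle)‖ = n * |β| := by
    intro n hn
    have habs : |(n : ℝ) * β| = n * |β| := by rw [abs_mul, Nat.abs_cast]
    rw [hsβ, ← AddCircle.coe_nsmul, nsmul_eq_mul, ← habs,
      AddCircle.norm_coe_eq_abs_iff _ one_ne_zero, habs]
    simpa using hn
  by_contra hx
  have hβ0 : 0 < |β| := abs_pos.2 fun h0 => hx (by rw [hsβ, h0, AddCircle.coe_zero])
  obtain ⟨n, hn₁, hn₂⟩ : ∃ n : ℕ, 1 / 4 ≤ n * |β| ∧ n * |β| ≤ 1 / 2 := by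
    rcases le_or_gt (1 / 4) |β| with hbig | hsmall
    · exact ⟨1, by simpa using hbig, by simpa using abs_sub_round s⟩
    · refine ⟨⌈1 / (4 * |β|)⌉₊, ?_, ?_⟩
      · calc (1 : ℝ) / 4 = 1 / (4 * |β|) * |β| := by field_simp
          _ ≤ _ := by gcongr; exact Nat.le_ceil _
      · have := Nat.ceil_lt_add_one (by positivity : 0 ≤ 1 / (4 * |β|))
        calc _ ≤ (1 / (4 * |β|) + 1) * |β| := by gcongr
          _ = 1 / 4 + |β| := by field_simp
          _ ≤ 1 / 2 := by linarith
  exact (h n).not_ge (hnorm n hn₂ ▸ hn₁)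

theorem AddSubgroup.exists_pos_mem_of_forall_exists_dist_nsmul_lt {E ι : Type*}
    [SeminormedAddCommGroup E] [NormedSpace ℝ E] [Fintype ι] (q : E →L[ℝ] (ι → ℝ))
    {V : AddSubgroup E} (hV : ∀ x, x ∈ V ↔ ∀ i, q x i ∈ Set.range ((↑) : ℤ → ℝ)) :
    ∃ ε > 0, ∀ x : E, (∀ n : ℕ, ∃ v ∈ V, dist (n • x) v < ε) → x ∈ V := by
  refine ⟨1 / (4 * (‖q‖ + 1)), by positivity, fun x hx => (hV x).2 fun i => ?_⟩
  suffices ((q x i : ℝ) : UnitAddCircle) = 0 by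
    obtain ⟨m, hm⟩ := (AddCircle.coe_eq_zero_iff 1).1 this
    exact ⟨m, by simpa using hm⟩
  refine UnitAddCircle.eq_zero_of_forall_norm_nsmul_lt fun n => ?_
  obtain ⟨v, hv, hdist⟩ := hx n
  obtain ⟨m, hm⟩ := (hV v).1 hv i
  calc ‖n • ((q x i : ℝ) : UnitAddCircle)‖ = ‖((q (n • x - v) i : ℝ) : UnitAddCircle)‖ := by
        simp [← hm]
    _ ≤ ‖q (n • x - v) i‖ := QuotientAddGroup.norm_mk_le_norm
    _ ≤ ‖q (n • x - v)‖ := norm_le_pi_norm _ i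
    _ ≤ ‖q‖ * dist (n • x) v := by rw [dist_eq_norm]; exact q.le_opNorm _
    _ ≤ ‖q‖ * (1 / (4 * (‖q‖ + 1))) := by gcongr
    _ < 1 / 4 := by
        rw [mul_one_div, div_lt_div_iff₀ (by positivity) (by norm_num)]
        linarith [norm_nonneg q]

theorem norm_natFloor_div_norm_smul_sub_le {E : Type*} [NormedAddCommGroup E] [NormedSpace ℝ E]
    (u : E) {t : ℝ} (ht : 0 ≤ t) : ‖⌊t / ‖u‖⌋₊ • u - t • ‖u‖⁻¹ • u‖ ≤ ‖u‖ := by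
  have h₀ := Nat.floor_le (div_nonneg ht (norm_nonneg u))
  have h₁ := Nat.lt_floor_add_one (t / ‖u‖)
  rw [smul_smul, ← div_eq_mul_inv, ← Nat.cast_smul_eq_nsmul ℝ, ← sub_smul, norm_smul,
    Real.norm_eq_abs]
  calc |(⌊t / ‖u‖⌋₊ : ℝ) - t / ‖u‖| * ‖u‖ ≤ 1 * ‖u‖ := by
        gcongr; rw [abs_le]; constructor <;> linarith
    _ = ‖u‖ := one_mul _

namespace AddSubgroup

variable {E : Type*}

def lineality (R : Type*) [Semiring R] [AddCommGroup E] [Module R E] (V : AddSubgroup E) :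
    Submodule R E where
  carrier := {v | ∀ t : R, t • v ∈ V}
  add_mem' ha hb t := by simpa [smul_add] using V.add_mem (ha t) (hb t)
  zero_mem' _ := by simp
  smul_mem' c v hv t := by simpa [smul_smul] using hv (t * c)

theorem lineality_subset {R : Type*} [Semiring R] [AddCommGroup E] [Module R E]
    (V : AddSubgroup E) : (V.lineality R : Set E) ⊆ V :=
  fun v hv => by simpa using hv 1

variable [NormedAddCommGroup E] [NormedSpace ℝ E]

theorem mem_lineality_of_tendsto {V : AddSubgroup E} (hV : IsClosed (V : Set E)) {u : ℕ → E}
    (huV : ∀ k, u k ∈ V) (hu : Tendsto u atTop (𝓝 0)) {a : E}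
    (ha : Tendsto (fun k => ‖u k‖⁻¹ • u k) atTop (𝓝 a)) : a ∈ V.lineality ℝ := by
  have hnonneg : ∀ t : ℝ, 0 ≤ t → t • a ∈ V := by
    intro t ht
    have hdiff : Tendsto (fun k => ⌊t / ‖u k‖⌋₊ • u k - t • ‖u k‖⁻¹ • u k) atTop (𝓝 0) :=
      squeeze_zero_norm (fun k => norm_natFloor_div_norm_smul_sub_le (u k) ht)
        (tendsto_norm_zero.comp hu)
    exact hV.mem_of_tendsto (by simpa using hdiff.add (ha.const_smul t))
      (Eventually.of_forall fun k => V.nsmul_mem (huV k) _)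
  intro t
  rcases le_total 0 t with ht | ht
  · exact hnonneg t ht
  · simpa using V.neg_mem (hnonneg (-t) (neg_nonneg.2 ht))

theorem exists_pos_le_norm_of_disjoint_lineality [FiniteDimensional ℝ E] {V : AddSubgroup E}
    (hV : IsClosed (V : Set E)) {W : Submodule ℝ E} (hW : Disjoint W (V.lineality ℝ)) :
    ∃ r > 0, ∀ u ∈ V, u ∈ W → u ≠ 0 → r ≤ ‖u‖ := by
  by_contra! h
  choose u huV huW hu0 hur using fun k : ℕ => h (1 / (k + 1)) (by positivity)
  have hS : IsCompact (sphere (0 : E) 1 ∩ W) :=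
    (isCompact_sphere 0 1).inter_right W.closed_of_finiteDimensional
  have he : ∀ k, ‖u k‖⁻¹ • u k ∈ sphere (0 : E) 1 ∩ W := fun k =>
    ⟨by simpa using norm_smul_inv_norm (𝕜 := ℝ) (hu0 k), W.smul_mem _ (huW k)⟩
  obtain ⟨a, ⟨ha₁, haW⟩, φ, hφ, ha⟩ := hS.tendsto_subseq he
  have hu : Tendsto (u ∘ φ) atTop (𝓝 0) :=
    squeeze_zero_norm (fun k => (hur (φ k)).le)
      (tendsto_one_div_add_atTop_nhds_zero_nat.comp hφ.tendsto_atTop)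
  have haL : a ∈ V.lineality ℝ := mem_lineality_of_tendsto hV (fun k => huV (φ k)) hu ha
  have ha₀ : a = 0 := (Submodule.disjoint_def.1 hW) a haW haL
  simp [ha₀] at ha₁

theorem exists_continuousLinearMap_mem_iff [FiniteDimensional ℝ E] {V : AddSubgroup E} (hV : IsClosed (V : Set E))
    (hspan : Submodule.span ℝ (V : Set E) = ⊤) :
    ∃ (r : ℕ) (q : E →L[ℝ] (Fin r → ℝ)), ∀ x, x ∈ V ↔ ∀ i, q x i ∈ Set.range ((↑) : ℤ → ℝ) := by
  obtain ⟨W, hW⟩ := (V.lineality ℝ).exists_isCompl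
  set p := W.projectionOnto _ hW.symm
  have hpV : ∀ x, x ∈ V ↔ (p x : E) ∈ V := fun x => by
    have h : x - p x ∈ V := V.lineality_subset (Submodule.sub_projection_mem hW.symm x)
    exact ⟨fun hx => sub_sub_cancel x (p x : E) ▸ V.sub_mem hx h,
      fun hx => sub_add_cancel x (p x : E) ▸ V.add_mem h hx⟩
  let D : Submodule ℤ W := (V.comap W.subtype.toAddMonoidHom).toIntSubmodule
  have : DiscreteTopology D := by
    obtain ⟨r, hr, hrV⟩ := exists_pos_le_norm_of_disjoint_lineality hV hW.symm.disjoint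
    refine DiscreteTopology.of_forall_le_dist hr fun x y hxy => ?_
    show r ≤ dist x y
    rw [dist_eq_norm]
    exact hrV _ (D.sub_mem x.2 y.2) ((x - y : D) : W).2 (by simpa [sub_eq_zero] using hxy)
  have : IsZLattice ℝ D := by
    refine ⟨eq_top_iff.2 ?_⟩
    calc (⊤ : Submodule ℝ W) = Submodule.map p (Submodule.span ℝ (V : Set E)) := by
          rw [hspan, Submodule.map_top, Submodule.range_projectionOnto]
      _ = Submodule.span ℝ (p '' V) := (Submodule.span_image p).symm
      _ ≤ Submodule.span ℝ (D : Set W) :=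
          Submodule.span_mono (Set.image_subset_iff.2 fun x hx => (hpV x).1 hx)
  have : Module.Free ℤ D := ZLattice.module_free ℝ D
  have : Module.Finite ℤ D := ZLattice.module_finite ℝ D
  let b := (Module.Free.chooseBasis ℤ D).reindex (Fintype.equivFin _)
  let c := b.ofZLatticeBasis ℝ D
  refine ⟨_, c.equivFun.toContinuousLinearEquiv.toContinuousLinearMap.comp
    (LinearMap.toContinuousLinearMap p), fun x => ?_⟩
  rw [hpV x]
  refine (SetLike.ext_iff.1 (b.ofZLatticeBasis_span ℝ D) (p x)).symm.trans ?_
  rw [c.mem_span_iff_repr_mem ℤ]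
  simp [c]

end AddSubgroup

noncomputable def torusMk (ι : Type*) : (ι → ℝ) →+ (ι → UnitAddCircle) :=
  (QuotientAddGroup.mk' _).compLeft ι

section Torus

variable {ι : Type*}

@[simp]
theorem torusMk_apply (x : ι → ℝ) (i : ι) : torusMk ι x i = x i := rfl

theorem continuous_torusMk : Continuous (torusMk ι) :=
  continuous_pi fun i => (AddCircle.continuous_mk' 1).comp (continuous_apply i)

theorem torusMk_surjective : Function.Surjective (torusMk ι) :=
  QuotientAddGroup.mk_surjective.comp_left

variable [Fintype ι]

theorem exists_norm_sub_intCast_le_norm_torusMk (x : ι → ℝ) :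
    ∃ m : ι → ℤ, ‖x - fun i => (m i : ℝ)‖ ≤ ‖torusMk ι x‖ :=
  ⟨fun i => round (x i), (pi_norm_le_iff_of_nonneg (norm_nonneg _)).2 fun i => by
    simpa [UnitAddCircle.norm_eq] using norm_le_pi_norm (torusMk ι x) i⟩

theorem AddSubgroup.exists_pos_le_of_forall_exists_dist_lt {L : AddSubgroup (ι → UnitAddCircle)}
    (hL : IsClosed (L : Set (ι → UnitAddCircle))) :
    ∃ ε > 0, ∀ K : AddSubgroup (ι → UnitAddCircle), (∀ x ∈ K, ∃ y ∈ L, dist x y < ε) → K ≤ L := by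
  set V := L.comap (torusMk ι)
  have hint : ∀ m : ι → ℤ, (fun i => (m i : ℝ)) ∈ V := fun m => by
    simp [V, show torusMk ι (fun i => (m i : ℝ)) = 0 from funext fun i => by simp]
  have hspan : Submodule.span ℝ (V : Set (ι → ℝ)) = ⊤ := by
    classical
    rw [eq_top_iff, ← (Pi.basisFun ℝ ι).span_eq]
    refine Submodule.span_mono ?_
    rintro _ ⟨i, rfl⟩
    rw [SetLike.mem_coe, Pi.basisFun_apply]
    convert hint (Pi.single i 1) using 1
    ext j
    rcases eq_or_ne j i with rfl | hji <;> simp [*]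
  obtain ⟨r, q, hq⟩ := AddSubgroup.exists_continuousLinearMap_mem_iff
    (hL.preimage continuous_torusMk) hspan
  obtain ⟨ε, hε, hεV⟩ := AddSubgroup.exists_pos_mem_of_forall_exists_dist_nsmul_lt q hq
  refine ⟨ε, hε, fun K hK x hx => ?_⟩
  obtain ⟨y, rfl⟩ := torusMk_surjective x
  refine hεV y fun n => ?_
  obtain ⟨l, hl, hdist⟩ := hK _ (K.nsmul_mem hx n)
  obtain ⟨w, rfl⟩ := torusMk_surjective l
  obtain ⟨m, hm⟩ := exists_norm_sub_intCast_le_norm_torusMk (n • y - w)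
  refine ⟨w + fun i => (m i : ℝ), V.add_mem hl (hint m), ?_⟩
  calc dist (n • y) (w + fun i => (m i : ℝ)) = ‖n • y - w - fun i => (m i : ℝ)‖ := by
        rw [dist_eq_norm, sub_add_eq_sub_sub]
    _ ≤ ‖torusMk ι (n • y - w)‖ := hm
    _ < ε := by rwa [map_sub, map_nsmul, ← dist_eq_norm]

end Torus

theorem TopologicalSpace.NonemptyCompacts.isClosed_setOf_coe_addSubgroup {G : Type*}
    [TopologicalSpace G] [AddGroup G] [IsTopologicalAddGroup G] [T2Space G] :
    IsClosed {K : NonemptyCompacts G | ∃ H : AddSubgroup G, (H : Set G) = K} := by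
  have : {K : NonemptyCompacts G | ∃ H : AddSubgroup G, (H : Set G) = K} =
      {K | (K ×ˢ K).map (fun p : G × G => p.1 - p.2) continuous_sub ⊔ K = K} := by
    ext K
    simp only [Set.mem_ofPred_eq, ← SetLike.coe_set_eq, coe_sup, coe_map, coe_prod,
      Set.union_eq_right, Set.image_subset_iff]
    constructor
    · rintro ⟨H, hH⟩ ⟨a, b⟩ ⟨ha, hb⟩
      rw [← hH] at ha hb ⊢
      exact H.sub_mem ha hb
    · intro h
      refine ⟨AddSubgroup.ofSub K K.nonempty fun a ha b hb => ?_, rfl⟩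
      simpa [sub_eq_add_neg] using h (Set.mk_mem_prod ha hb)
  rw [this]
  exact isClosed_eq (by fun_prop) continuous_id

theorem TopologicalSpace.NonemptyCompacts.exists_dist_lt_of_dist_lt {α : Type*} [MetricSpace α]
    {K L : NonemptyCompacts α} {x : α} (hx : x ∈ K) {r : ℝ} (h : dist K L < r) :
    ∃ y ∈ L, dist x y < r :=
  exists_dist_lt_of_hausdorffDist_lt hx h <| hausdorffEDist_ne_top_of_nonempty_of_bounded
    K.nonempty L.nonempty K.isCompact.isBounded L.isCompact.isBounded

theorem AddSubgroup.finite_setOf_maximal_isClosed_inter_eq_empty {G : Type*} [MetricSpace G]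
    [CompactSpace G] [AddGroup G] [IsTopologicalAddGroup G]
    (hG : ∀ L : AddSubgroup G, IsClosed (L : Set G) →
      ∃ ε > 0, ∀ K : AddSubgroup G, (∀ x ∈ K, ∃ y ∈ L, dist x y < ε) → K ≤ L)
    {U : Set G} (hU : IsOpen U) :
    {H : AddSubgroup G | Maximal (fun H : AddSubgroup G =>
      IsClosed (H : Set G) ∧ (H : Set G) ∩ U = ∅) H}.Finite := by
  rw [← Set.not_infinite]
  intro hinf
  let S : Set (NonemptyCompacts G) :=
    {K | ∃ H : AddSubgroup G, (H : Set G) = K} ∩ {K | (K : Set G) ⊆ Uᶜ}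
  have hS : IsCompact S := (NonemptyCompacts.isClosed_setOf_coe_addSubgroup.inter
    (NonemptyCompacts.isClosed_subsets_of_isClosed hU.isClosed_compl)).isCompact
  let M : Set (NonemptyCompacts G) := {K | ∃ H : AddSubgroup G, Maximal (fun H : AddSubgroup G =>
      IsClosed (H : Set G) ∧ (H : Set G) ∩ U = ∅) H ∧ (H : Set G) = K}
  have hMS : M ⊆ S := by
    rintro K ⟨H, hH, hHK⟩
    refine ⟨⟨H, hHK⟩, ?_⟩
    rw [Set.mem_ofPred_eq, ← hHK]
    exact Set.subset_compl_iff_disjoint_right.2 (Set.disjoint_iff_inter_eq_empty.2 hH.1.2)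
  have hM : M.Infinite := by
    refine (hinf.mono fun H hH => ?_).of_image fun K : NonemptyCompacts G => AddSubgroup.closure K
    exact ⟨⟨⟨H, hH.1.1.isCompact⟩, ⟨0, H.zero_mem⟩⟩, ⟨H, hH, rfl⟩, AddSubgroup.closure_eq H⟩
  obtain ⟨L, ⟨⟨L', hL'⟩, hLU⟩, hacc⟩ := hM.exists_accPt_of_subset_isCompact hS hMS
  have hL'closed : IsClosed (L' : Set G) := hL' ▸ L.isCompact.isClosed
  obtain ⟨ε, hε, hεL⟩ := hG L' hL'closed
  obtain ⟨K, ⟨hKL, H, hH, hHK⟩, hne⟩ := accPt_iff_nhds.1 hacc _ (ball_mem_nhds L hε)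
  have hle : H ≤ L' := hεL H fun x hx => by
    rw [← SetLike.mem_coe, hHK, SetLike.mem_coe] at hx
    simpa only [← SetLike.mem_coe, hL'] using NonemptyCompacts.exists_dist_lt_of_dist_lt hx hKL
  have hL'U : (L' : Set G) ∩ U = ∅ :=
    Set.disjoint_iff_inter_eq_empty.1 (Set.subset_compl_iff_disjoint_right.1 (hL' ▸ hLU))
  exact hne (NonemptyCompacts.ext
    (hHK.symm.trans ((congrArg _ (hH.eq_of_le ⟨hL'closed, hL'U⟩ hle)).trans hL')))

/-- Lawrence: in the real torus `T = ℝ^d/ℤ^d` (modelled as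
`Fin d → ℝ/ℤ`, i.e. `Fin d → AddCircle 1`), for every open subset `U`,
the collection of closed subgroups of `T` disjoint from `U` has only finitely
many maximal elements with respect to inclusion. -/
theorem toric_mld_stmt4 (d : ℕ) (U : Set (Fin d → AddCircle (1:ℝ)))
    (hU : IsOpen U) :
    {H : AddSubgroup (Fin d → AddCircle (1:ℝ)) |
      (IsClosed (H : Set (Fin d → AddCircle (1:ℝ))) ∧
        (H : Set (Fin d → AddCircle (1:ℝ))) ∩ U = ∅) ∧
      ∀ H' : AddSubgroup (Fin d → AddCircle (1:ℝ)),
        (IsClosed (H' : Set (Fin d → AddCircle (1:ℝ))) ∧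
          (H' : Set (Fin d → AddCircle (1:ℝ))) ∩ U = ∅) →
        H ≤ H' → H = H'}.Finite :=
  (AddSubgroup.finite_setOf_maximal_isClosed_inter_eq_empty
    (fun _ hL => AddSubgroup.exists_pos_le_of_forall_exists_dist_lt hL) hU).subset
    fun _ hH => ⟨hH.1, fun H' hH' hle => (hH.2 H' hH' hle).ge⟩
end

section
/- Let T = ℝ^d/ℤ^d be the real d-dimensional torus. Then the collection of subsets of T that are finite unions of closed subgroups of T satisfies the descending chain condition with respect to inclusion: there is no infinite strictly decreasing sequence X_1 ⊋ X_2 ⊋ X_3 ⊋ ⋯ of such subsets. -/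
/-!
A coset `a + S` of a closed divisible subgroup `S` of a compact abelian group is irreducible: if
finitely many cosets of closed subgroups cover it, one of them already contains it (Baire makes
one of them open in `S`, and a divisible group has no proper subgroup of finite index). Every
closed subgroup of the torus is a finite union of such cosets, and such cosets satisfy the
descending chain condition because closed subgroups of the torus do; both facts are proved one
coordinate at a time from the circle, whose proper closed subgroups are finite. Write each term
of a chain as the union of its maximal cosets: irreducibility turns each strict step into a
decrease in the Dershowitz–Manna order on finite multisets of cosets, which is well founded.
-/

open scoped Nat Pointwise Topology

theorem Finset.isDershowitzMannaLT_val_of_isAntichain {β : Type*} [PartialOrder β]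
    [DecidableEq β] {A B : Finset β} (hB : IsAntichain (· ≤ ·) (B : Set β))
    (hBA : ∀ b ∈ B, ∃ a ∈ A, b ≤ a) (hAB : ∃ a ∈ A, ∀ b ∈ B, ¬ a ≤ b) :
    Multiset.IsDershowitzMannaLT B.val A.val := by
  refine ⟨B.val ∩ A.val, B.val - A.val, A.val - B.val, ?_, ?_, ?_, ?_⟩
  · obtain ⟨a, ha, hab⟩ := hAB
    have : a ∈ A.val - B.val := by
      rw [← sdiff_val]
      exact mem_sdiff.2 ⟨ha, fun h => hab a h le_rfl⟩
    rintro h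
    simp [h] at this
  · rw [add_comm, Multiset.sub_add_inter]
  · rw [Multiset.inter_comm, add_comm, Multiset.sub_add_inter]
  · intro b hb
    rw [← sdiff_val, mem_val, mem_sdiff] at hb
    obtain ⟨a, ha, hba⟩ := hBA b hb.1
    have hlt : b < a := lt_of_le_of_ne hba fun h => hb.2 (h ▸ ha)
    refine ⟨a, ?_, hlt⟩
    rw [← sdiff_val, mem_val, mem_sdiff]
    exact ⟨ha, fun haB => hB hb.1 haB hlt.ne hba⟩

theorem Finset.biUnion_filter_maximal_eq {α β : Type*} [PartialOrder β] {f : β → Set α}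
    (hf : Monotone f) (s : Finset β) [DecidablePred (Maximal (· ∈ s))] :
    ⋃ b ∈ s.filter (Maximal (· ∈ s)), f b = ⋃ b ∈ s, f b := by
  refine subset_antisymm (Set.biUnion_subset_biUnion_left fun b hb => (mem_filter.1 hb).1)
    (Set.iUnion₂_subset fun b hb => ?_)
  obtain ⟨c, hbc, hc⟩ := s.exists_le_maximal hb
  exact (hf hbc).trans (Set.subset_biUnion_of_mem (u := f) (mem_filter.2 ⟨hc.prop, hc⟩))

theorem not_strictAnti_of_forall_finite_sUnion {α : Type*} (𝒜 : Set (Set α)) [WellFoundedLT 𝒜]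
    (h𝒜 : ∀ P ∈ 𝒜, ∀ t ⊆ 𝒜, t.Finite → P ⊆ ⋃₀ t → ∃ Q ∈ t, P ⊆ Q)
    {X : ℕ → Set α} (hX : ∀ n, ∃ t ⊆ 𝒜, t.Finite ∧ X n = ⋃₀ t) : ¬ StrictAnti X := by
  classical
  intro hanti
  have hX' : ∀ n, ∃ s : Finset 𝒜, X n = ⋃ Q ∈ s, (Q : Set α) := by
    intro n
    obtain ⟨t, ht𝒜, ht, hXt⟩ := hX n
    refine ⟨(ht.preimage Subtype.val_injective.injOn).toFinset, hXt.trans ?_⟩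
    ext x
    simp only [Set.mem_sUnion, Set.mem_iUnion, Set.Finite.mem_toFinset, Set.mem_preimage,
      exists_prop]
    exact ⟨fun ⟨Q, hQ, hx⟩ => ⟨⟨Q, ht𝒜 hQ⟩, hQ, hx⟩, fun ⟨Q, hQ, hx⟩ => ⟨Q, hQ, hx⟩⟩
  choose s hs using hX'
  have subset_biUnion {P : 𝒜} {u : Finset 𝒜} (hP : P ∈ u) : (P : Set α) ⊆ ⋃ Q ∈ u, (Q : Set α) :=
    Set.subset_biUnion_of_mem (u := fun Q : 𝒜 => (Q : Set α)) hP
  let A : ℕ → Finset 𝒜 := fun n => (s n).filter (Maximal (· ∈ s n))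
  have hA : ∀ n, X n = ⋃ Q ∈ A n, (Q : Set α) := fun n =>
    (hs n).trans (Finset.biUnion_filter_maximal_eq (f := fun Q : 𝒜 => (Q : Set α))
      (fun _ _ h => h) _).symm
  have hA_anti : ∀ n, IsAntichain (· ≤ ·) (A n : Set 𝒜) := fun n P hP Q hQ hne hPQ =>
    hne ((Finset.mem_filter.1 hP).2.eq_of_le (Finset.mem_filter.1 hQ).2.prop hPQ)
  have hstep : ∀ n, Multiset.IsDershowitzMannaLT (A (n + 1)).val (A n).val := by
    intro n
    refine Finset.isDershowitzMannaLT_val_of_isAntichain (hA_anti _) (fun P hP => ?_) ?_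
    · have hP : (P : Set α) ⊆ ⋃₀ (Subtype.val '' (A n : Set 𝒜)) := by
        rw [Set.sUnion_image, Finset.set_biUnion_coe, ← hA]
        exact ((subset_biUnion hP).trans (hA _).symm.subset).trans (hanti n.lt_succ_self).le
      obtain ⟨_, ⟨Q, hQ, rfl⟩, hPQ⟩ :=
        h𝒜 P P.2 _ (Subtype.coe_image_subset _ _) ((A n).finite_toSet.image _) hP
      exact ⟨Q, hQ, hPQ⟩
    · by_contra! h
      refine (hanti n.lt_succ_self).not_ge ?_
      rw [hA n, hA (n + 1)]
      refine Set.iUnion₂_subset fun P hP => ?_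
      obtain ⟨Q, hQ, hPQ⟩ := h P hP
      exact (show (P : Set α) ⊆ Q from hPQ).trans (subset_biUnion hQ)
  obtain ⟨n, hn⟩ := WellFounded.not_rel_apply_succ (r := Multiset.IsDershowitzMannaLT)
    (h := ⟨Multiset.wellFounded_isDershowitzMannaLT⟩) fun n => (A n).val
  exact hn (hstep n)

namespace AddSubgroup

theorem eq_of_le_of_map_eq_of_comap_eq {G G' G'' : Type*} [AddGroup G] [AddGroup G']
    [AddGroup G''] {f : G →+ G'} {g : G'' →+ G} (hfg : f.ker ≤ g.range) {H K : AddSubgroup G}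
    (hHK : H ≤ K) (hmap : H.map f = K.map f) (hcomap : H.comap g = K.comap g) : H = K := by
  refine le_antisymm hHK fun x hx => ?_
  obtain ⟨y, hy, hyx⟩ := (hmap ▸ mem_map_of_mem f hx : f x ∈ H.map f)
  obtain ⟨z, hz⟩ := hfg (show -y + x ∈ f.ker by simp [AddMonoidHom.mem_ker, hyx])
  have hzH : z ∈ H.comap g :=
    hcomap ▸ (show g z ∈ K by rw [hz]; exact K.add_mem (K.neg_mem (hHK hy)) hx)
  simpa [hz] using H.add_mem hy hzH

theorem le_of_vadd_subset_vadd {G : Type*} [AddGroup G] {a b : G} {S T : AddSubgroup G}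
    (h : a +ᵥ (S : Set G) ⊆ b +ᵥ (T : Set G)) : S ≤ T := by
  intro x hx
  have h₀ := (mem_leftAddCoset_iff b).1 (h (mem_own_leftAddCoset S.toAddSubmonoid a))
  have h₁ := (mem_leftAddCoset_iff b).1 (h (Set.vadd_mem_vadd_set (a := a) hx))
  simpa [add_assoc] using T.add_mem (T.neg_mem h₀) h₁

end AddSubgroup

namespace ClosedAddSubgroup

theorem wellFoundedLT_of_ker_le_range {G G' G'' : Type*} [AddGroup G] [TopologicalSpace G]
    [CompactSpace G] [AddGroup G'] [TopologicalSpace G'] [T2Space G'] [AddGroup G'']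
    [TopologicalSpace G''] [WellFoundedLT (ClosedAddSubgroup G')]
    [WellFoundedLT (ClosedAddSubgroup G'')] {f : G →+ G'} {g : G'' →+ G} (hf : Continuous f)
    (hg : Continuous g) (hfg : f.ker ≤ g.range) : WellFoundedLT (ClosedAddSubgroup G) := by
  let Φ : ClosedAddSubgroup G → ClosedAddSubgroup G'' × ClosedAddSubgroup G' := fun H =>
    (⟨H.toAddSubgroup.comap g, H.isClosed'.preimage hg⟩,
     ⟨H.toAddSubgroup.map f, (H.isClosed'.isCompact.image hf).isClosed⟩)
  refine StrictMono.wellFoundedLT (f := Φ) fun H K hHK => ?_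
  refine lt_of_le_of_ne ⟨AddSubgroup.comap_mono hHK.le, AddSubgroup.map_mono hHK.le⟩
    fun h => hHK.ne ?_
  exact toAddSubgroup_injective <| AddSubgroup.eq_of_le_of_map_eq_of_comap_eq hfg hHK.le
    (congrArg (fun p => p.2.toAddSubgroup) h) (congrArg (fun p => p.1.toAddSubgroup) h)

instance finite {G : Type*} [AddGroup G] [TopologicalSpace G] [Finite G] :
    Finite (ClosedAddSubgroup G) :=
  Finite.of_injective _ SetLike.coe_injective

end ClosedAddSubgroup

namespace AddSubgroup

section Divisible

variable {G : Type*} [AddCommGroup G]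

def IsDivisible (S : AddSubgroup G) : Prop :=
  ∀ n : ℕ, n ≠ 0 → S ≤ n • S

theorem isDivisible_bot : (⊥ : AddSubgroup G).IsDivisible := fun _ _ => bot_le

theorem nsmul_mono {S T : AddSubgroup G} (h : S ≤ T) (n : ℕ) : n • S ≤ n • T := by
  intro x hx
  obtain ⟨y, hy, rfl⟩ := (mem_smul_pointwise_iff_exists _ _ _).1 hx
  exact (mem_smul_pointwise_iff_exists _ _ _).2 ⟨y, h hy, rfl⟩

theorem nsmul_le_nsmul_of_dvd (H : AddSubgroup G) {m n : ℕ} (h : m ∣ n) : n • H ≤ m • H := by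
  obtain ⟨c, rfl⟩ := h
  intro x hx
  obtain ⟨y, hy, rfl⟩ := (mem_smul_pointwise_iff_exists _ _ _).1 hx
  exact (mem_smul_pointwise_iff_exists _ _ _).2 ⟨c • y, nsmul_mem hy c, (mul_nsmul' y m c).symm⟩

theorem IsDivisible.sup {S T : AddSubgroup G} (hS : S.IsDivisible) (hT : T.IsDivisible) :
    (S ⊔ T).IsDivisible := fun n hn =>
  sup_le ((hS n hn).trans (nsmul_mono le_sup_left n))
    ((hT n hn).trans (nsmul_mono le_sup_right n))

theorem IsDivisible.map {G' : Type*} [AddCommGroup G'] {S : AddSubgroup G} (hS : S.IsDivisible)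
    (f : G →+ G') : (S.map f).IsDivisible := by
  rintro n hn _ ⟨x, hx, rfl⟩
  obtain ⟨y, hy, rfl⟩ := (mem_smul_pointwise_iff_exists _ _ _).1 (hS n hn hx)
  exact (mem_smul_pointwise_iff_exists _ _ _).2
    ⟨f y, mem_map_of_mem f hy, (map_nsmul f n y).symm⟩

theorem IsDivisible.le_of_relIndex_ne_zero {S T : AddSubgroup G} (hS : S.IsDivisible)
    (hST : T.relIndex S ≠ 0) : S ≤ T := by
  intro x hx
  obtain ⟨y, hy, rfl⟩ := (mem_smul_pointwise_iff_exists _ _ _).1 (hS _ hST hx)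
  exact T.nsmul_relIndex_mem hy

/-- Every positive integer divides some `k !`, and the `k ! • H` decrease, so that compactness
arguments apply to this intersection. -/
def divisibleCore (H : AddSubgroup G) : AddSubgroup G := ⨅ k : ℕ, k ! • H

theorem mem_divisibleCore {H : AddSubgroup G} {x : G} :
    x ∈ H.divisibleCore ↔ ∀ k : ℕ, x ∈ k ! • H :=
  mem_iInf

theorem divisibleCore_le (H : AddSubgroup G) : H.divisibleCore ≤ H := fun x hx => by
  simpa using mem_divisibleCore.1 hx 0

end Divisible

section Compact

variable {G : Type*} [AddCommGroup G] [TopologicalSpace G] [IsTopologicalAddGroup G]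
  [CompactSpace G]

/-- By Baire, one of the cosets meets `a +ᵥ S` in a set with interior, so it cuts out an open,
hence finite-index, subgroup of the compact group `S`; divisibility leaves no room for that. -/
theorem IsDivisible.exists_vadd_subset_of_vadd_subset_iUnion {S : AddSubgroup G}
    (hS : S.IsDivisible) (hS_closed : IsClosed (S : Set G)) (a : G) {ι : Type*} [Finite ι]
    {b : ι → G} {T : ι → AddSubgroup G} (hT : ∀ i, IsClosed (T i : Set G))
    (hcover : a +ᵥ (S : Set G) ⊆ ⋃ i, b i +ᵥ (T i : Set G)) :
    ∃ i, a +ᵥ (S : Set G) ⊆ b i +ᵥ (T i : Set G) := by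
  have : CompactSpace S := isCompact_iff_compactSpace.mp hS_closed.isCompact
  let F : ι → Set S := fun i => {y | -b i + (a + y) ∈ T i}
  have hF_closed : ∀ i, IsClosed (F i) := fun i =>
    (hT i).preimage (continuous_const.add (continuous_const.add continuous_subtype_val))
  have hF_cover : ⋃ i, F i = Set.univ := Set.eq_univ_of_forall fun y => by
    obtain ⟨i, hi⟩ := Set.mem_iUnion.1 (hcover (Set.vadd_mem_vadd_set y.2))
    exact Set.mem_iUnion.2 ⟨i, (mem_leftAddCoset_iff _).1 hi⟩
  obtain ⟨i, x, hx⟩ := nonempty_interior_of_iUnion_of_closed hF_closed hF_cover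
  have hxF : x ∈ F i := interior_subset hx
  have hU : ((T i).addSubgroupOf S : Set S) ∈ 𝓝 0 := by
    have hcont : Filter.Tendsto (fun u : S => x + u) (𝓝 0) (𝓝 x) := by
      simpa using (continuous_const_add x).tendsto (0 : S)
    filter_upwards [hcont (mem_interior_iff_mem_nhds.1 hx)] with u hu
    have := (T i).sub_mem (show -b i + (a + (x + u : S)) ∈ T i from hu) hxF
    rw [SetLike.mem_coe, mem_addSubgroupOf]
    convert this using 1
    push_cast
    abel
  have := quotient_finite_of_isOpen _ (isOpen_of_mem_nhds _ hU)
  have hST : S ≤ T i := hS.le_of_relIndex_ne_zero index_ne_zero_of_finite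
  refine ⟨i, Set.vadd_set_subset_iff.2 fun y hy => (mem_leftAddCoset_iff _).2 ?_⟩
  have := (T i).add_mem hxF (hST (S.sub_mem hy x.2))
  rw [SetLike.mem_coe, vadd_eq_add]
  convert this using 1
  abel

variable [T2Space G]

theorem isClosed_nsmul {H : AddSubgroup G} (hH : IsClosed (H : Set G)) (n : ℕ) :
    IsClosed ((n • H : AddSubgroup G) : Set G) := by
  rw [coe_pointwise_smul, ← Set.image_smul]
  exact (hH.isCompact.image (continuous_const_smul n)).isClosed

theorem isClosed_divisibleCore {H : AddSubgroup G} (hH : IsClosed (H : Set G)) :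
    IsClosed (H.divisibleCore : Set G) := by
  rw [divisibleCore, coe_iInf]
  exact isClosed_iInter fun k => isClosed_nsmul hH _

theorem exists_mem_divisibleCore_of_forall {G' : Type*} [AddCommGroup G'] [TopologicalSpace G']
    [T1Space G'] {H : AddSubgroup G} (hH : IsClosed (H : Set G)) {f : G →+ G'}
    (hf : Continuous f) {t : G'} (ht : ∀ k : ℕ, ∃ y ∈ k ! • H, f y = t) :
    ∃ y ∈ H.divisibleCore, f y = t := by
  let F : ℕ → Set G := fun k => ((k ! • H : AddSubgroup G) : Set G) ∩ f ⁻¹' {t}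
  have hF_closed : ∀ k, IsClosed (F k) := fun k =>
    (isClosed_nsmul hH _).inter (isClosed_singleton.preimage hf)
  have hF_anti : ∀ k, F (k + 1) ⊆ F k := fun k => Set.inter_subset_inter_left _
    (nsmul_le_nsmul_of_dvd H (Nat.factorial_dvd_factorial k.le_succ))
  obtain ⟨y, hy⟩ := IsCompact.nonempty_iInter_of_sequence_nonempty_isCompact_isClosed F hF_anti
    ht (hF_closed 0).isCompact hF_closed
  simp only [Set.mem_iInter] at hy
  exact ⟨y, mem_divisibleCore.2 fun k => (hy k).1, (hy 0).2⟩

theorem isDivisible_divisibleCore {H : AddSubgroup G} (hH : IsClosed (H : Set G)) :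
    H.divisibleCore.IsDivisible := by
  intro n hn x hx
  obtain ⟨y, hy, hyx⟩ := exists_mem_divisibleCore_of_forall hH (f := nsmulAddMonoidHom n)
    (continuous_nsmul n) (t := x) fun k => by
      have hnk : n * k ! ∣ (n * k !)! := Nat.dvd_factorial (by positivity) le_rfl
      obtain ⟨z, hz, hzx⟩ := (mem_smul_pointwise_iff_exists _ _ _).1 <|
        nsmul_le_nsmul_of_dvd H hnk (mem_divisibleCore.1 hx (n * k !))
      refine ⟨k ! • z, (mem_smul_pointwise_iff_exists _ _ _).2 ⟨z, hz, rfl⟩, ?_⟩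
      rw [← hzx, mul_nsmul']
      rfl
  exact (mem_smul_pointwise_iff_exists _ _ _).2 ⟨y, hy, hyx⟩

theorem le_map_divisibleCore {G' : Type*} [AddCommGroup G'] [TopologicalSpace G'] [T1Space G']
    {H : AddSubgroup G} (hH : IsClosed (H : Set G)) {f : G →+ G'} (hf : Continuous f)
    {S : AddSubgroup G'} (hS : S.IsDivisible) (hSH : S ≤ H.map f) :
    S ≤ H.divisibleCore.map f := by
  intro t ht
  refine exists_mem_divisibleCore_of_forall hH hf fun k => ?_
  obtain ⟨s, hs, rfl⟩ :=
    (mem_smul_pointwise_iff_exists _ _ _).1 (hS _ (Nat.factorial_ne_zero k) ht)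
  obtain ⟨y, hy, rfl⟩ := hSH hs
  exact ⟨k ! • y, (mem_smul_pointwise_iff_exists _ _ _).2 ⟨y, hy, rfl⟩, map_nsmul f _ y⟩

end Compact

section VirtuallyDivisible

variable {G : Type*} [AddCommGroup G] [TopologicalSpace G]

def IsVirtuallyDivisible (H : AddSubgroup G) : Prop :=
  ∃ S ≤ H, IsClosed (S : Set G) ∧ S.IsDivisible ∧ ∃ E : Set G, E.Finite ∧ E + S = H

theorem isVirtuallyDivisible_of_finite [T1Space G] {H : AddSubgroup G}
    (hH : (H : Set G).Finite) : H.IsVirtuallyDivisible :=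
  ⟨⊥, bot_le, by simp, isDivisible_bot, H, hH, by simp⟩

theorem IsDivisible.isVirtuallyDivisible {S : AddSubgroup G} (hS : S.IsDivisible)
    (hS_closed : IsClosed (S : Set G)) : S.IsVirtuallyDivisible :=
  ⟨S, le_rfl, hS_closed, hS, {0}, Set.finite_singleton 0, by simp⟩

/-- A divisible subgroup of finite index in `f(H)` lifts into the divisible core of `H`; what
is left over lies in `ker f`, hence comes from `H.comap g`. -/
theorem IsVirtuallyDivisible.of_ker_le_range [IsTopologicalAddGroup G] [CompactSpace G]
    [T2Space G] {G' : Type*} [AddCommGroup G'] [TopologicalSpace G'] [T1Space G']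
    {G'' : Type*} [AddCommGroup G''] [TopologicalSpace G''] [CompactSpace G'']
    {f : G →+ G'} {g : G'' →+ G} (hf : Continuous f) (hg : Continuous g) (hfg : f.ker ≤ g.range)
    {H : AddSubgroup G} (hH : IsClosed (H : Set G)) (hmap : (H.map f).IsVirtuallyDivisible)
    (hcomap : (H.comap g).IsVirtuallyDivisible) : H.IsVirtuallyDivisible := by
  obtain ⟨S', hS'H, -, hS'div, E', hE'fin, hE'⟩ := hmap
  obtain ⟨S'', hS''H, hS''cl, hS''div, E'', hE''fin, hE''⟩ := hcomap
  have hE'H : E' ⊆ f '' H := coe_map f H ▸ hE' ▸ Set.subset_add_left E' (zero_mem S')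
  have hE''H : E'' ⊆ H.comap g := hE'' ▸ Set.subset_add_left E'' (zero_mem S'')
  obtain ⟨E₀, hE₀H, hE₀fin, rfl⟩ :=
    Set.exists_subset_image_finite_and.1 ⟨E', hE'H, hE'fin, rfl⟩
  have hS'core : S' ≤ H.divisibleCore.map f := le_map_divisibleCore hH hf hS'div hS'H
  have hSH : H.divisibleCore ⊔ S''.map g ≤ H :=
    sup_le (divisibleCore_le H) (map_le_iff_le_comap.2 hS''H)
  refine ⟨H.divisibleCore ⊔ S''.map g, hSH, ?_, (isDivisible_divisibleCore hH).sup (hS''div.map g),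
    E₀ + g '' E'', hE₀fin.add (hE''fin.image g), subset_antisymm ?_ fun x hx => ?_⟩
  · rw [add_normal]
    exact ((isClosed_divisibleCore hH).isCompact.add (hS''cl.isCompact.image hg)).isClosed
  · rintro _ ⟨_, ⟨e₀, he₀, _, ⟨e'', he'', rfl⟩, rfl⟩, s, hs, rfl⟩
    exact H.add_mem (H.add_mem (hE₀H he₀) (hE''H he'')) (hSH hs)
  · obtain ⟨_, ⟨e₀, he₀, rfl⟩, s', hs', hfx⟩ : f x ∈ f '' E₀ + S' := by
      rw [hE', coe_map]
      exact Set.mem_image_of_mem f hx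
    obtain ⟨c, hc, rfl⟩ := hS'core hs'
    obtain ⟨z, hz⟩ := hfg (show x - (e₀ + c) ∈ f.ker by simp [AddMonoidHom.mem_ker, ← hfx])
    obtain ⟨e'', he'', s'', hs'', rfl⟩ : z ∈ E'' + S'' := by
      rw [hE'']
      show g z ∈ H
      rw [hz]
      exact H.sub_mem hx (H.add_mem (hE₀H he₀) (divisibleCore_le H hc))
    refine ⟨e₀ + g e'', Set.add_mem_add he₀ (Set.mem_image_of_mem g he''), c + g s'',
      mem_sup.2 ⟨c, hc, g s'', mem_map_of_mem g hs'', rfl⟩, ?_⟩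
    rw [map_add, eq_sub_iff_add_eq] at hz
    rw [← hz]
    show e₀ + g e'' + (c + g s'') = g e'' + g s'' + (e₀ + c)
    abel

end VirtuallyDivisible

end AddSubgroup

namespace AddCircle

variable {p : ℝ} [Fact (0 < p)]

theorem finite_of_isClosed_of_ne_top {H : AddSubgroup (AddCircle p)}
    (hH : IsClosed (H : Set (AddCircle p))) (hne : H ≠ ⊤) : (H : Set (AddCircle p)).Finite := by
  have hnd : ¬ Dense (H : Set (AddCircle p)) := fun hd =>
    hne (AddSubgroup.coe_eq_univ.1 (hH.closure_eq ▸ hd.closure_eq))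
  obtain ⟨a, ha, rfl⟩ : ∃ a, addOrderOf a ≠ 0 ∧ H = .zmultiples a := by
    simpa [dense_addSubgroup_iff_ne_zmultiples] using hnd
  refine (finite_torsion p (Nat.pos_of_ne_zero ha)).subset ?_
  rintro _ ⟨k, rfl⟩
  simp [smul_comm _ k a, addOrderOf_nsmul_eq_zero]

theorem isDivisible_top : (⊤ : AddSubgroup (AddCircle p)).IsDivisible := by
  intro n hn x _
  refine (AddSubgroup.mem_smul_pointwise_iff_exists _ _ _).2
    ⟨DivisibleBy.div x (n : ℤ), trivial, ?_⟩
  rw [← natCast_zsmul]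
  exact DivisibleBy.div_cancel x (by exact_mod_cast hn)

instance : WellFoundedLT (ClosedAddSubgroup (AddCircle p)) := by
  refine StrictMono.wellFoundedLT (f := fun H => (H : Set (AddCircle p)).encard) fun H K hHK => ?_
  refine (finite_of_isClosed_of_ne_top H.isClosed' fun hH => ?_).encard_lt_encard hHK
  exact hHK.not_ge fun x _ => show x ∈ H.toAddSubgroup from hH ▸ AddSubgroup.mem_top x

theorem isVirtuallyDivisible {H : AddSubgroup (AddCircle p)}
    (hH : IsClosed (H : Set (AddCircle p))) : H.IsVirtuallyDivisible := by
  obtain rfl | hne := eq_or_ne H ⊤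
  · exact isDivisible_top.isVirtuallyDivisible isClosed_univ
  · exact AddSubgroup.isVirtuallyDivisible_of_finite (finite_of_isClosed_of_ne_top hH hne)

end AddCircle

section FinPi

variable {A : Type*} [AddCommGroup A]

variable (A) in
def finConsZero (d : ℕ) : (Fin d → A) →+ (Fin (d + 1) → A) where
  toFun := Matrix.vecCons 0
  map_zero' := Matrix.cons_zero_zero
  map_add' x y := by rw [Matrix.cons_add_cons, add_zero]

theorem ker_evalAddMonoidHom_zero_le_range_finConsZero (d : ℕ) :
    (Pi.evalAddMonoidHom (fun _ : Fin (d + 1) => A) 0).ker ≤ (finConsZero A d).range := by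
  intro x hx
  refine ⟨Fin.tail x, ?_⟩
  have hx0 : x 0 = 0 := hx
  conv_rhs => rw [← Fin.cons_self_tail x, hx0]
  rfl

variable [TopologicalSpace A]

theorem continuous_finConsZero (d : ℕ) : Continuous (finConsZero A d) := by
  show Continuous fun x : Fin d → A => (Fin.cons (0 : A) x : Fin (d + 1) → A)
  exact continuous_const.finCons continuous_id

variable [CompactSpace A]

theorem wellFoundedLT_closedAddSubgroup_fin_pi [T2Space A] [WellFoundedLT (ClosedAddSubgroup A)]
    (d : ℕ) : WellFoundedLT (ClosedAddSubgroup (Fin d → A)) := by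
  induction d with
  | zero => infer_instance
  | succ d ih =>
    exact ClosedAddSubgroup.wellFoundedLT_of_ker_le_range (f := Pi.evalAddMonoidHom _ 0)
      (continuous_apply 0) (continuous_finConsZero d)
      (ker_evalAddMonoidHom_zero_le_range_finConsZero d)

theorem isVirtuallyDivisible_fin_pi [IsTopologicalAddGroup A] [T2Space A]
    (hA : ∀ H : AddSubgroup A, IsClosed (H : Set A) → H.IsVirtuallyDivisible) (d : ℕ)
    (H : AddSubgroup (Fin d → A)) (hH : IsClosed (H : Set (Fin d → A))) :
    H.IsVirtuallyDivisible := by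
  induction d with
  | zero => exact AddSubgroup.isVirtuallyDivisible_of_finite (Set.toFinite _)
  | succ d ih =>
    have hH_map : IsClosed (H.map (Pi.evalAddMonoidHom _ 0) : Set A) := by
      rw [AddSubgroup.coe_map]
      exact (hH.isCompact.image (continuous_apply 0)).isClosed
    exact AddSubgroup.IsVirtuallyDivisible.of_ker_le_range (f := Pi.evalAddMonoidHom _ 0)
      (continuous_apply 0) (continuous_finConsZero d)
      (ker_evalAddMonoidHom_zero_le_range_finConsZero d) hH (hA _ hH_map)
      (ih _ (hH.preimage (continuous_finConsZero d)))

end FinPi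

section DivisibleCosets

variable {G : Type*} [AddCommGroup G] [TopologicalSpace G]

variable (G) in
def divisibleCosets : Set (Set G) :=
  {C | ∃ (a : G) (S : AddSubgroup G), IsClosed (S : Set G) ∧ S.IsDivisible ∧
    C = a +ᵥ (S : Set G)}

theorem wellFoundedLT_divisibleCosets [WellFoundedLT (ClosedAddSubgroup G)] :
    WellFoundedLT (divisibleCosets G) := by
  choose a S hS _ haS using fun C : divisibleCosets G => C.2
  refine StrictMono.wellFoundedLT (f := fun C => (⟨S C, hS C⟩ : ClosedAddSubgroup G))
    fun C D hCD => ?_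
  have hCD' : a C +ᵥ (S C : Set G) ⊂ a D +ᵥ (S D : Set G) := haS C ▸ haS D ▸ hCD
  refine lt_of_le_of_ne (AddSubgroup.le_of_vadd_subset_vadd hCD'.subset) fun hS_eq => hCD'.ne ?_
  have hS_eq : S C = S D := congrArg ClosedAddSubgroup.toAddSubgroup hS_eq
  rw [← hS_eq] at hCD' ⊢
  exact ((leftAddCoset_eq_iff _).2 <| (mem_leftAddCoset_iff _).1 <|
    hCD'.subset (mem_own_leftAddCoset (S C).toAddSubmonoid _)).symm

theorem subset_of_subset_sUnion_divisibleCosets [IsTopologicalAddGroup G] [CompactSpace G]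
    {P : Set G} (hP : P ∈ divisibleCosets G) {t : Set (Set G)} (ht : t ⊆ divisibleCosets G)
    (ht_fin : t.Finite) (hPt : P ⊆ ⋃₀ t) : ∃ Q ∈ t, P ⊆ Q := by
  obtain ⟨a, S, hS_closed, hS, rfl⟩ := hP
  choose b T hT _ hbT using fun Q : t => ht Q.2
  have := ht_fin.to_subtype
  obtain ⟨Q, hQ⟩ := hS.exists_vadd_subset_of_vadd_subset_iUnion hS_closed a hT <|
    hPt.trans (Set.sUnion_eq_iUnion.trans_subset (Set.iUnion_mono fun Q => (hbT Q).subset))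
  exact ⟨Q, Q.2, hbT Q ▸ hQ⟩

theorem exists_finite_subset_divisibleCosets
    (hG : ∀ H : AddSubgroup G, IsClosed (H : Set G) → H.IsVirtuallyDivisible)
    (s : Finset (AddSubgroup G)) (hs : ∀ H ∈ s, IsClosed (H : Set G)) :
    ∃ t ⊆ divisibleCosets G, t.Finite ∧ ⋃ H ∈ s, (H : Set G) = ⋃₀ t := by
  choose! S _ hS_closed hS E hE hES using fun H hH => hG H (hs H hH)
  refine ⟨⋃ H ∈ s, (· +ᵥ (S H : Set G)) '' E H, ?_,
    s.finite_toSet.biUnion fun H hH => (hE H hH).image _, ?_⟩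
  · simp only [Set.iUnion_subset_iff, Set.image_subset_iff]
    exact fun H hH e _ => ⟨e, S H, hS_closed H hH, hS H hH, rfl⟩
  · simp only [Set.sUnion_iUnion, Set.sUnion_image]
    refine Set.iUnion₂_congr fun H hH => ?_
    rw [← hES H hH, Set.iUnion_vadd_set]
    rfl

end DivisibleCosets

/-- Lawrence: in the real torus `T = ℝ^d/ℤ^d` (modelled as
`Fin d → ℝ/ℤ`, i.e. `Fin d → AddCircle 1`), the collection of subsets which are
finite unions of closed subgroups satisfies the descending chain condition:
there is no strictly decreasing sequence `X₁ ⊋ X₂ ⊋ ⋯` of such subsets. -/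
theorem toric_mld_stmt5 (d : ℕ) :
    ¬ ∃ X : ℕ → Set (Fin d → AddCircle (1:ℝ)),
      (∀ n, ∃ s : Finset (AddSubgroup (Fin d → AddCircle (1:ℝ))),
        (∀ H ∈ s, IsClosed (H : Set (Fin d → AddCircle (1:ℝ)))) ∧
        X n = ⋃ H ∈ s, (H : Set (Fin d → AddCircle (1:ℝ)))) ∧
      ∀ n, X (n + 1) ⊂ X n := by
  rintro ⟨X, hX, hX_lt⟩
  have := wellFoundedLT_closedAddSubgroup_fin_pi (A := AddCircle (1 : ℝ)) d
  have := wellFoundedLT_divisibleCosets (G := Fin d → AddCircle (1 : ℝ))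
  refine not_strictAnti_of_forall_finite_sUnion _
    (fun _ hP _ ht ht_fin => subset_of_subset_sUnion_divisibleCosets hP ht ht_fin)
    (fun n => ?_) (strictAnti_nat_of_succ_lt hX_lt)
  obtain ⟨s, hs, hXs⟩ := hX n
  rw [hXs]
  exact exists_finite_subset_divisibleCosets
    (isVirtuallyDivisible_fin_pi (fun _ hH => AddCircle.isVirtuallyDivisible hH) d) s hs
end

section
/- Let A ⊆ [0,1] with 1 ∈ A, and assume A satisfies the ascending chain condition. Then for every d ≥ 1 the set {⟨x,a⟩ : (x,a) ∈ Ṽ_d(A)} satisfies the ascending chain condition. -/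
/-- A set of reals satisfies the ascending chain condition if it contains no
infinite strictly increasing sequence. -/
def SatisfiesACC (S : Set ℝ) : Prop := ¬ ∃ f : ℕ → ℝ, StrictMono f ∧ ∀ n, f n ∈ S

open Finset Filter Topology

/-- Simultaneous Dirichlet approximation via pigeonhole. -/
lemma dirichlet_approx {d : ℕ} (v : Fin d → ℝ) {ε : ℝ} (hε : 0 < ε) :
    ∃ m : ℕ, 1 ≤ m ∧ ∃ k : Fin d → ℤ, ∀ i, |(m : ℝ) * v i - (k i : ℝ)| ≤ ε := by
  obtain ⟨Q, hQ1, hQε⟩ : ∃ Q : ℕ, 1 ≤ Q ∧ (1 : ℝ) / Q ≤ ε := by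
    refine ⟨max 1 ⌈1/ε⌉₊, le_max_left _ _, ?_⟩
    have hQpos : (0:ℝ) < (max 1 ⌈1/ε⌉₊ : ℕ) := by positivity
    rw [div_le_iff₀ hQpos]
    have h1 : (1:ℝ)/ε ≤ (⌈1/ε⌉₊ : ℕ) := Nat.le_ceil _
    have h2 : ((⌈1/ε⌉₊ : ℕ) : ℝ) ≤ ((max 1 ⌈1/ε⌉₊ : ℕ) : ℝ) := by
      exact_mod_cast le_max_right _ _
    calc (1:ℝ) = ε * (1/ε) := by field_simp
    _ ≤ ε * ((max 1 ⌈1/ε⌉₊ : ℕ) : ℝ) := by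
        exact mul_le_mul_of_nonneg_left (h1.trans h2) hε.le
  have hQpos : (0:ℝ) < (Q:ℝ) := by exact_mod_cast hQ1
  have key : ∀ n₁ n₂ : ℕ, n₁ < n₂ →
      (∀ i, ⌊Int.fract ((n₁ : ℝ) * v i) * Q⌋₊ = ⌊Int.fract ((n₂ : ℝ) * v i) * Q⌋₊) →
      ∃ m : ℕ, 1 ≤ m ∧ ∃ k : Fin d → ℤ, ∀ i, |(m : ℝ) * v i - (k i : ℝ)| ≤ ε := by
    intro n₁ n₂ hlt hfl
    refine ⟨n₂ - n₁, by omega, fun i => ⌊(n₂ : ℝ) * v i⌋ - ⌊(n₁ : ℝ) * v i⌋, fun i => ?_⟩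
    have hcast : ((n₂ - n₁ : ℕ) : ℝ) = (n₂ : ℝ) - (n₁ : ℝ) := by
      push_cast [Nat.cast_sub hlt.le]; ring
    have hdiff : ((n₂ - n₁ : ℕ) : ℝ) * v i - ((⌊(n₂ : ℝ) * v i⌋ - ⌊(n₁ : ℝ) * v i⌋ : ℤ) : ℝ)
        = Int.fract ((n₂ : ℝ) * v i) - Int.fract ((n₁ : ℝ) * v i) := by
      rw [hcast]
      unfold Int.fract
      push_cast
      ring
    rw [hdiff]
    -- both fracts in same bucket
    set z₁ := Int.fract ((n₁ : ℝ) * v i) * Q with hz₁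
    set z₂ := Int.fract ((n₂ : ℝ) * v i) * Q with hz₂
    have hb : ⌊z₁⌋₊ = ⌊z₂⌋₊ := hfl i
    have hz₁0 : 0 ≤ z₁ := mul_nonneg (Int.fract_nonneg _) hQpos.le
    have hz₂0 : 0 ≤ z₂ := mul_nonneg (Int.fract_nonneg _) hQpos.le
    have h₁l : (⌊z₁⌋₊ : ℝ) ≤ z₁ := Nat.floor_le hz₁0
    have h₂l : (⌊z₂⌋₊ : ℝ) ≤ z₂ := Nat.floor_le hz₂0
    have h₁u : z₁ < ⌊z₁⌋₊ + 1 := Nat.lt_floor_add_one _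
    have h₂u : z₂ < ⌊z₂⌋₊ + 1 := Nat.lt_floor_add_one _
    have habs : |z₂ - z₁| < 1 := by
      rw [abs_sub_lt_iff]
      rw [hb] at h₁l h₁u
      constructor <;> linarith
    have : |Int.fract ((n₂ : ℝ) * v i) - Int.fract ((n₁ : ℝ) * v i)| * Q < 1 := by
      calc |Int.fract ((n₂ : ℝ) * v i) - Int.fract ((n₁ : ℝ) * v i)| * Q
          = |z₂ - z₁| := by rw [hz₁, hz₂, ← sub_mul, abs_mul, abs_of_nonneg hQpos.le]
      _ < 1 := habs
    have hlt' : |Int.fract ((n₂ : ℝ) * v i) - Int.fract ((n₁ : ℝ) * v i)| < 1 / Q := by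
      rw [lt_div_iff₀ hQpos]; exact this
    exact hlt'.le.trans hQε
  set F : Fin (Q ^ d + 1) → (Fin d → Fin Q) := fun j i =>
    ⟨⌊Int.fract (((j : ℕ) : ℝ) * v i) * Q⌋₊, by
      have h0 : (0:ℝ) ≤ Int.fract (((j : ℕ) : ℝ) * v i) := Int.fract_nonneg _
      have h1 : Int.fract (((j : ℕ) : ℝ) * v i) * Q < Q := by
        have hf1 := Int.fract_lt_one (((j : ℕ) : ℝ) * v i)
        nlinarith
      exact (Nat.floor_lt (by positivity)).mpr h1⟩ with hF
  have hcard : Fintype.card (Fin d → Fin Q) < Fintype.card (Fin (Q ^ d + 1)) := by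
    simp [Fintype.card_fun]
  obtain ⟨j₁, j₂, hne, hFeq⟩ := Fintype.exists_ne_map_eq_of_card_lt F hcard
  have hvne : (j₁ : ℕ) ≠ (j₂ : ℕ) := fun h => hne (Fin.ext h)
  have hfl : ∀ i, ⌊Int.fract (((j₁ : ℕ) : ℝ) * v i) * Q⌋₊ = ⌊Int.fract (((j₂ : ℕ) : ℝ) * v i) * Q⌋₊ := by
    intro i
    have := congrFun hFeq i
    simpa [hF, Fin.ext_iff] using this
  rcases hvne.lt_or_gt with h | h
  · exact key _ _ h hfl
  · exact key _ _ h (fun i => (hfl i).symm)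


/-- Key lemma: one can choose the Dirichlet approximation so that the weighted
signed error `∑ a i * (m * v i - k i)` is nonpositive. -/
lemma crux {d : ℕ} (v a : Fin d → ℝ) (I : Finset (Fin d)) (ha : ∀ i, 0 ≤ a i)
    {ε : ℝ} (hε : 0 < ε) :
    ∃ (m : ℕ) (k : Fin d → ℤ), 1 ≤ m ∧ (∀ i, |(m : ℝ) * v i - (k i : ℝ)| ≤ ε) ∧
      ∑ i ∈ I, a i * ((m : ℝ) * v i - (k i : ℝ)) ≤ 0 := by
  -- replace ε by ε' := min ε (1/4)
  set ε' := min ε (1/4) with hε'def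
  have hε'0 : 0 < ε' := lt_min hε (by norm_num)
  have hε'ε : ε' ≤ ε := min_le_left _ _
  have hε'q : ε' ≤ 1/4 := min_le_right _ _
  obtain ⟨m₁, hm₁, k₁, hk₁⟩ := dirichlet_approx v (half_pos hε'0)
  set σ₁ := ∑ i ∈ I, a i * ((m₁ : ℝ) * v i - (k₁ i : ℝ)) with hσ₁def
  by_cases hσ : σ₁ ≤ 0
  · exact ⟨m₁, k₁, hm₁, fun i => ((hk₁ i).trans (half_le_self hε'0.le)).trans hε'ε, hσ⟩
  push_neg at hσ
  set S := ∑ i ∈ I, a i with hSdef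
  have hS0 : 0 ≤ S := Finset.sum_nonneg fun i _ => ha i
  set t := min (ε' / 2) (σ₁ / (2 * (S + 1))) with htdef
  have ht0 : 0 < t := lt_min (half_pos hε'0) (by positivity)
  have ht2 : t ≤ ε' / 2 := min_le_left _ _
  obtain ⟨R, hR, P, hP⟩ := dirichlet_approx (fun i => (m₁ : ℝ) * v i) ht0
  have hSt : S * t ≤ σ₁ / 2 := by
    have h1 : t ≤ σ₁ / (2 * (S + 1)) := min_le_right _ _
    have h2 : S * t ≤ S * (σ₁ / (2 * (S + 1))) := mul_le_mul_of_nonneg_left h1 hS0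
    have h3 : S * (σ₁ / (2 * (S + 1))) ≤ σ₁ / 2 := by
      rw [mul_div_assoc', div_le_div_iff₀ (by positivity) (by norm_num : (0:ℝ) < 2)]
      nlinarith [hσ.le]
    exact h2.trans h3
  have hsum_bound : ∀ e : Fin d → ℝ, (∀ i, e i ≤ t) →
      ∑ i ∈ I, a i * e i ≤ S * t := by
    intro e he
    rw [hSdef, Finset.sum_mul]
    exact Finset.sum_le_sum fun i _ => mul_le_mul_of_nonneg_left (he i) (ha i)
  have hR2 : 2 ≤ R := by
    by_contra hcon
    have hR1 : R = 1 := by omega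
    have hPk : ∀ i, P i = k₁ i := by
      intro i
      have h1 := hP i
      rw [hR1] at h1
      push_cast at h1
      rw [one_mul] at h1
      have h2 := hk₁ i
      have habs : |(P i : ℝ) - (k₁ i : ℝ)| < 1 := by
        calc |(P i : ℝ) - (k₁ i : ℝ)|
            = |((m₁ : ℝ) * v i - (k₁ i : ℝ)) - ((m₁ : ℝ) * v i - (P i : ℝ))| := by ring_nf
        _ ≤ |(m₁ : ℝ) * v i - (k₁ i : ℝ)| + |(m₁ : ℝ) * v i - (P i : ℝ)| := abs_sub _ _
        _ ≤ ε' / 2 + t := add_le_add h2 h1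
        _ < 1 := by
            have : ε' ≤ 1/4 := hε'q
            linarith
      have h' : |(P i - k₁ i : ℤ)| < 1 := by
        have h'' : |((P i - k₁ i : ℤ) : ℝ)| < 1 := by push_cast; exact habs
        exact_mod_cast h''
      rw [abs_lt] at h'
      omega
    have : σ₁ ≤ S * t := by
      rw [hσ₁def]
      refine hsum_bound _ fun i => ?_
      have h1 := hP i
      rw [hR1] at h1
      push_cast at h1
      rw [one_mul] at h1
      rw [← hPk i]
      exact (abs_le.mp h1).2
    linarith
  refine ⟨(R - 1) * m₁, fun i => P i - k₁ i,
    le_trans (by norm_num) (Nat.mul_le_mul (by omega : 1 ≤ R - 1) hm₁), fun i => ?_, ?_⟩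
  · -- |(R-1) m₁ v i - (P i - k₁ i)| ≤ ε
    have hcast : (((R - 1) * m₁ : ℕ) : ℝ) = ((R : ℝ) - 1) * (m₁ : ℕ) := by
      push_cast [Nat.cast_sub (by omega : 1 ≤ R)]; ring
    have hdecomp : (((R - 1) * m₁ : ℕ) : ℝ) * v i - ((P i - k₁ i : ℤ) : ℝ)
        = ((R : ℝ) * ((m₁ : ℝ) * v i) - (P i : ℝ)) - ((m₁ : ℝ) * v i - (k₁ i : ℝ)) := by
      rw [hcast]; push_cast; ring
    rw [hdecomp]
    calc |((R : ℝ) * ((m₁ : ℝ) * v i) - (P i : ℝ)) - ((m₁ : ℝ) * v i - (k₁ i : ℝ))|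
        ≤ |(R : ℝ) * ((m₁ : ℝ) * v i) - (P i : ℝ)| + |(m₁ : ℝ) * v i - (k₁ i : ℝ)| := abs_sub _ _
    _ ≤ t + ε' / 2 := add_le_add (hP i) (hk₁ i)
    _ ≤ ε' := by linarith
    _ ≤ ε := hε'ε
  · -- the signed sum is ≤ S*t - σ₁ ≤ -σ₁/2 ≤ 0
    have hcast : (((R - 1) * m₁ : ℕ) : ℝ) = ((R : ℝ) - 1) * (m₁ : ℕ) := by
      push_cast [Nat.cast_sub (by omega : 1 ≤ R)]; ring
    have hsplit : ∑ i ∈ I, a i * ((((R - 1) * m₁ : ℕ) : ℝ) * v i - ((P i - k₁ i : ℤ) : ℝ))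
        = ∑ i ∈ I, a i * ((R : ℝ) * ((m₁ : ℝ) * v i) - (P i : ℝ)) - σ₁ := by
      rw [hσ₁def, ← Finset.sum_sub_distrib]
      refine Finset.sum_congr rfl fun i _ => ?_
      rw [hcast]; push_cast; ring
    rw [hsplit]
    have h1 : ∑ i ∈ I, a i * ((R : ℝ) * ((m₁ : ℝ) * v i) - (P i : ℝ)) ≤ S * t :=
      hsum_bound _ fun i => (abs_le.mp (hP i)).2
    linarith


/-- From ACC: every sequence with values in `A` has a nonincreasing subsequence. -/
lemma acc_antitone_subseq {A : Set ℝ} (hacc : SatisfiesACC A) (u : ℕ → ℝ)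
    (hu : ∀ n, u n ∈ A) : ∃ φ : ℕ → ℕ, StrictMono φ ∧ Antitone (u ∘ φ) := by
  obtain ⟨g, hg⟩ := exists_increasing_or_nonincreasing_subseq (· < · : ℝ → ℝ → Prop) u
  rcases hg with hg | hg
  · exact absurd ⟨u ∘ g, fun m n h => hg m n h, fun n => hu _⟩ hacc
  · refine ⟨g, g.strictMono, fun m n hmn => ?_⟩
    rcases eq_or_lt_of_le hmn with rfl | h
    · exact le_refl _
    · exact not_lt.mp (hg m n h)

/-- Simultaneous nonincreasing subsequence for finitely many `A`-valued sequences. -/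
lemma acc_antitone_subseq_multi {A : Set ℝ} (hacc : SatisfiesACC A) {d : ℕ}
    (a : ℕ → Fin d → ℝ) (ha : ∀ n i, a n i ∈ A) :
    ∃ φ : ℕ → ℕ, StrictMono φ ∧ ∀ i, Antitone fun n => a (φ n) i := by
  have main : ∀ l : List (Fin d), ∃ φ : ℕ → ℕ, StrictMono φ ∧
      ∀ i ∈ l, Antitone fun n => a (φ n) i := by
    intro l
    induction l with
    | nil => exact ⟨id, strictMono_id, by simp⟩
    | cons i l ih =>
      obtain ⟨φ, hφ, hl⟩ := ih
      obtain ⟨ψ, hψ, hi⟩ := acc_antitone_subseq hacc (fun n => a (φ n) i) (fun n => ha _ _)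
      refine ⟨φ ∘ ψ, hφ.comp hψ, fun j hj => ?_⟩
      rcases List.mem_cons.mp hj with rfl | hj
      · exact hi
      · exact (hl j hj).comp_monotone hψ.monotone
  obtain ⟨φ, hφ, h⟩ := main (List.finRange d)
  exact ⟨φ, hφ, fun i => h i (List.mem_finRange i)⟩


open Finset in
/-- if `A` satisfies the ACC then so does
`{⟨x,a⟩ : (x,a) ∈ Ṽ_d(A)}` for every `d ≥ 1`. -/
theorem toric_mld_stmt6 (A : Set ℝ) (hA : A ⊆ Set.Icc 0 1) (h1 : (1:ℝ) ∈ A)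
    (hacc : SatisfiesACC A) (d : ℕ) (hd : 1 ≤ d) :
    SatisfiesACC {r : ℝ | ∃ p ∈ Vtilde d A, r = ∑ i, p.1 i * p.2 i} := by
  rintro ⟨f, hf, hmem⟩
  have hch : ∀ n, ∃ p : (Fin d → ℝ) × (Fin d → ℝ),
      p ∈ Vtilde d A ∧ f n = ∑ i, p.1 i * p.2 i := fun n => hmem n
  choose p hpV hpf using hch
  have hx : ∀ n i, (p n).1 i ∈ Set.Ioc (0:ℝ) 1 := fun n => (hpV n).1
  have ha : ∀ n i, (p n).2 i ∈ A := fun n => (hpV n).2.1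
  have hcon : ∀ n (M : ℤ),
      0 ≤ ∑ i, (1 + ((M:ℝ) - 1) * (p n).1 i - (⌈(M:ℝ) * (p n).1 i⌉ : ℝ)) * (p n).2 i :=
    fun n => (hpV n).2.2
  -- extract a subsequence where x converges and a is coordinatewise nonincreasing
  have hxmem : ∀ n, (p n).1 ∈ Set.Icc (0 : Fin d → ℝ) 1 := by
    intro n
    rw [Set.mem_Icc]
    exact ⟨fun i => (hx n i).1.le, fun i => (hx n i).2⟩
  obtain ⟨xs, hxsIcc, φ₁, hφ₁, hconv⟩ :=
    (isCompact_Icc : IsCompact (Set.Icc (0 : Fin d → ℝ) 1)).tendsto_subseq hxmem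
  obtain ⟨φ₂, hφ₂, hanti⟩ := acc_antitone_subseq_multi hacc
    (fun n i => (p (φ₁ n)).2 i) (fun n i => ha _ i)
  set Φ : ℕ → ℕ := φ₁ ∘ φ₂ with hΦdef
  have hΦmono : StrictMono Φ := hφ₁.comp hφ₂
  set X : ℕ → Fin d → ℝ := fun n => (p (Φ n)).1 with hXdef
  set aa : ℕ → Fin d → ℝ := fun n => (p (Φ n)).2 with haadef
  have hXconv : ∀ i, Tendsto (fun n => X n i) atTop (𝓝 (xs i)) := by
    have h2 : Tendsto (((fun n => (p n).1) ∘ φ₁) ∘ φ₂) atTop (𝓝 xs) :=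
      hconv.comp hφ₂.tendsto_atTop
    intro i
    exact (tendsto_pi_nhds.mp h2) i
  have hAanti : ∀ i, Antitone fun n => aa n i := hanti
  have hX0 : ∀ n i, 0 < X n i := fun n i => (hx (Φ n) i).1
  have hX1 : ∀ n i, X n i ≤ 1 := fun n i => (hx (Φ n) i).2
  have haa0 : ∀ n i, 0 ≤ aa n i := fun n i => (hA (ha (Φ n) i)).1
  have haa1 : ∀ n i, aa n i ≤ 1 := fun n i => (hA (ha (Φ n) i)).2
  have hxs0 : ∀ i, 0 ≤ xs i := fun i => (Set.mem_Icc.mp hxsIcc).1 i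
  -- limits of the a-coordinates
  set astar : Fin d → ℝ := fun i => ⨅ n, aa n i with hastardef
  have hAbdd : ∀ i, BddBelow (Set.range fun n => aa n i) := fun i =>
    ⟨0, fun y ⟨n, hn⟩ => hn ▸ haa0 n i⟩
  have hAconv : ∀ i, Tendsto (fun n => aa n i) atTop (𝓝 (astar i)) := fun i =>
    tendsto_atTop_ciInf (hAanti i) (hAbdd i)
  have hast0 : ∀ i, 0 ≤ astar i := fun i => le_ciInf fun n => haa0 n i
  -- the value sequence
  set V : ℕ → ℝ := fun n => ∑ i, X n i * aa n i with hVdef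
  have hVf : ∀ n, V n = f (Φ n) := fun n => (hpf (Φ n)).symm
  have hVmono : StrictMono V := by
    have : V = f ∘ Φ := funext fun n => hVf n
    rw [this]
    exact hf.comp hΦmono
  have hVbdd : BddAbove (Set.range V) := by
    refine ⟨d, fun y ⟨n, hn⟩ => ?_⟩
    rw [← hn]
    calc V n ≤ ∑ _i : Fin d, (1:ℝ) := by
          refine Finset.sum_le_sum fun i _ => ?_
          have := mul_le_one₀ (hX1 n i) (haa0 n i) (haa1 n i)
          simpa using this
    _ = d := by simp
  set L : ℝ := ⨆ n, V n with hLdef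
  have hVtend : Tendsto V atTop (𝓝 L) := tendsto_atTop_ciSup hVmono.monotone hVbdd
  have hVlt : ∀ n, V n < L :=
    fun n => lt_of_lt_of_le (hVmono (Nat.lt_succ_self n)) (le_ciSup hVbdd (n + 1))
  have hLsum : L = ∑ i, xs i * astar i := by
    refine tendsto_nhds_unique hVtend (tendsto_finset_sum _ fun i _ => ?_)
    exact (hXconv i).mul (hAconv i)
  -- choose the approximation data
  set I : Finset (Fin d) := Finset.univ.filter fun i => 0 < xs i with hIdef
  have hxsI : ∀ i ∈ I, 0 < xs i := fun i hi => (Finset.mem_filter.mp hi).2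
  obtain ⟨ε, hε0, hεle⟩ : ∃ ε : ℝ, 0 < ε ∧ ∀ i ∈ I, ε ≤ xs i / 2 := by
    by_cases hI : I.Nonempty
    · refine ⟨(I.inf' hI xs) / 2, ?_, ?_⟩
      · have : 0 < I.inf' hI xs := by
          rw [Finset.lt_inf'_iff]
          exact fun i hi => hxsI i hi
        linarith
      · intro i hi
        have := Finset.inf'_le xs hi
        linarith
    · exact ⟨1, one_pos, fun i hi => absurd ⟨i, hi⟩ hI⟩
  obtain ⟨m, k, hm, hk, hσ⟩ := crux xs astar I hast0 hε0
  have hmR : (0:ℝ) < (m:ℝ) := by exact_mod_cast hm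
  set k' : Fin d → ℤ := fun i => if 0 < xs i then k i else 0 with hk'def
  have hk'0 : ∀ i, (0:ℝ) ≤ (k' i : ℝ) := by
    intro i
    rw [hk'def]
    by_cases h : 0 < xs i
    · simp only [if_pos h]
      have hiI : i ∈ I := Finset.mem_filter.mpr ⟨Finset.mem_univ i, h⟩
      have h1 := (abs_le.mp (hk i)).2
      have h2 := hεle i hiI
      have h3 : xs i ≤ (m:ℝ) * xs i := le_mul_of_one_le_left (hxs0 i) (by exact_mod_cast hm)
      linarith
    · simp [if_neg h]
  have hklt : ∀ i, 0 < xs i → (k' i : ℝ) < (1 + (m:ℝ)) * xs i := by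
    intro i h
    rw [hk'def]
    simp only [if_pos h]
    have hiI : i ∈ I := Finset.mem_filter.mpr ⟨Finset.mem_univ i, h⟩
    have h1 := (abs_le.mp (hk i)).1
    have h2 := hεle i hiI
    nlinarith
  -- eventual strict bound
  have hev : ∀ᶠ n in atTop, ∀ i, (k' i : ℝ) < (1 + (m:ℝ)) * X n i := by
    refine Filter.eventually_all.mpr fun i => ?_
    by_cases h : 0 < xs i
    · have htd : Tendsto (fun n => (1 + (m:ℝ)) * X n i) atTop (𝓝 ((1 + (m:ℝ)) * xs i)) :=
        (hXconv i).const_mul _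
      exact htd.eventually (eventually_gt_nhds (hklt i h))
    · refine Eventually.of_forall fun n => ?_
      rw [hk'def]
      simp only [if_neg h]
      push_cast
      exact mul_pos (by positivity) (hX0 n i)
  obtain ⟨N, hN⟩ := eventually_atTop.mp hev
  -- the defect at time N is nonnegative thanks to the constraint at M = 1 + m
  set Bq : ℝ := ∑ i, ((m:ℝ) * X N i - (k' i : ℝ)) * aa N i with hBqdef
  have hBq0 : 0 ≤ Bq := by
    have hc := hcon (Φ N) ((1 : ℤ) + m)
    refine le_trans hc (Finset.sum_le_sum fun i _ => ?_)
    have hceil : ((k' i : ℤ) + 1 : ℤ) ≤ ⌈(((1:ℤ) + m : ℤ) : ℝ) * X N i⌉ := by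
      have h1 : ((k' i : ℤ) : ℝ) < (((1:ℤ) + m : ℤ) : ℝ) * X N i := by
        push_cast
        exact hN N le_rfl i
      exact Int.add_one_le_iff.mpr (Int.lt_ceil.mpr h1)
    have hceilR : ((k' i : ℝ) + 1 : ℝ) ≤ (⌈(((1:ℤ) + m : ℤ) : ℝ) * X N i⌉ : ℝ) := by
      exact_mod_cast hceil
    have haan := haa0 N i
    have : 1 + ((((1:ℤ) + m : ℤ) : ℝ) - 1) * X N i - (⌈(((1:ℤ) + m : ℤ) : ℝ) * X N i⌉ : ℝ)
        ≤ (m:ℝ) * X N i - (k' i : ℝ) := by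
      push_cast at hceilR ⊢
      linarith
    exact mul_le_mul_of_nonneg_right this haan
  -- the frozen rational anchor
  set G : ℕ → ℝ := fun n => ∑ i, ((k' i : ℝ) / m) * aa n i with hGdef
  have hGanti : Antitone G := by
    intro n n' hnn'
    refine Finset.sum_le_sum fun i _ => ?_
    exact mul_le_mul_of_nonneg_left (hAanti i hnn') (div_nonneg (hk'0 i) hmR.le)
  set Ginf : ℝ := ∑ i, ((k' i : ℝ) / m) * astar i with hGinfdef
  have hGtend : Tendsto G atTop (𝓝 Ginf) :=
    tendsto_finset_sum _ fun i _ => (hAconv i).const_mul _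
  -- L ≤ Ginf
  have hLG : L ≤ Ginf := by
    have hσ' : ∑ i, astar i * ((m:ℝ) * xs i - (k' i : ℝ)) ≤ 0 := by
      have hzero : ∀ i ∈ Finset.univ, i ∉ I → astar i * ((m:ℝ) * xs i - (k' i : ℝ)) = 0 := by
        intro i _ hiI
        have hxz : ¬ 0 < xs i := fun h => hiI (Finset.mem_filter.mpr ⟨Finset.mem_univ i, h⟩)
        have hxs : xs i = 0 := le_antisymm (not_lt.mp hxz) (hxs0 i)
        rw [hk'def]
        simp [if_neg hxz, hxs]
      have heq : ∑ i ∈ I, astar i * ((m:ℝ) * xs i - (k' i : ℝ))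
          = ∑ i, astar i * ((m:ℝ) * xs i - (k' i : ℝ)) :=
        Finset.sum_subset (Finset.subset_univ I) hzero
      rw [← heq]
      have heq2 : ∑ i ∈ I, astar i * ((m:ℝ) * xs i - (k' i : ℝ))
          = ∑ i ∈ I, astar i * ((m:ℝ) * xs i - (k i : ℝ)) := by
        refine Finset.sum_congr rfl fun i hi => ?_
        rw [hk'def]
        simp [if_pos (hxsI i hi)]
      rw [heq2]
      exact hσ
    have hdiff : Ginf - ∑ i, xs i * astar i
        = (-(∑ i, astar i * ((m:ℝ) * xs i - (k' i : ℝ)))) / m := by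
      calc Ginf - ∑ i, xs i * astar i
          = ∑ i, (((k' i : ℝ) / m) * astar i - xs i * astar i) := by
            rw [hGinfdef, Finset.sum_sub_distrib]
      _ = ∑ i, (-(astar i * ((m:ℝ) * xs i - (k' i : ℝ))) / m) := by
            refine Finset.sum_congr rfl fun i _ => ?_
            field_simp
            ring
      _ = (-(∑ i, astar i * ((m:ℝ) * xs i - (k' i : ℝ)))) / m := by
            rw [← Finset.sum_div, ← Finset.sum_neg_distrib]
    have hnn : 0 ≤ Ginf - ∑ i, xs i * astar i := by
      rw [hdiff]
      exact div_nonneg (neg_nonneg.mpr hσ') hmR.le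
    rw [hLsum]
    linarith
  -- conclude
  have hGN : Ginf ≤ G N :=
    le_of_tendsto hGtend (eventually_atTop.mpr ⟨N, fun n hn => hGanti hn⟩)
  have hVN : V N = G N + Bq / m := by
    rw [hVdef, hGdef, hBqdef, Finset.sum_div, ← Finset.sum_add_distrib]
    refine Finset.sum_congr rfl fun i _ => ?_
    field_simp
    ring
  have hfin : L ≤ V N := by
    have hBqm : 0 ≤ Bq / m := div_nonneg hBq0 hmR.le
    calc L ≤ Ginf := hLG
    _ ≤ G N := hGN
    _ ≤ G N + Bq / m := le_add_of_nonneg_right hBqm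
    _ = V N := hVN.symm
  exact absurd hfin (not_le.mpr (hVlt N))
end

section
/- Let A ⊆ [0,1] with 1 ∈ A, and assume A is a closed subset of ℝ. Then for every d ≥ 1, Ṽ_d(A) is a closed subset of (0,1]^d × A^d (with the subspace topology from ℝ^d × ℝ^d): if a sequence (x^n, a^n) ∈ Ṽ_d(A) converges to a point (x,a) ∈ (0,1]^d × A^d, then (x,a) ∈ Ṽ_d(A). -/
/-- if `A` is closed, then `Ṽ_d(A)` is closed in
`(0,1]^d × A^d`: a limit of a sequence of elements of `Ṽ_d(A)` which lies in
`(0,1]^d × A^d` again belongs to `Ṽ_d(A)`. -/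
theorem toric_mld_stmt8 (A : Set ℝ) (hA : A ⊆ Set.Icc 0 1) (h1 : (1:ℝ) ∈ A)
    (hclosed : IsClosed A) (d : ℕ) (hd : 1 ≤ d)
    (p : ℕ → (Fin d → ℝ) × (Fin d → ℝ)) (hp : ∀ n, p n ∈ Vtilde d A)
    (x a : Fin d → ℝ) (hx : ∀ i, x i ∈ Set.Ioc (0:ℝ) 1) (ha : ∀ i, a i ∈ A)
    (hlim : Filter.Tendsto p Filter.atTop (nhds (x, a))) :
    (x, a) ∈ Vtilde d A := by
  refine ⟨hx, ha, fun m => ?_⟩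
  have hx' : ∀ i, Filter.Tendsto (fun n => (p n).1 i) Filter.atTop (nhds (x i)) := fun i =>
    (((continuous_apply i).comp continuous_fst).continuousAt.tendsto).comp hlim
  have ha' : ∀ i, Filter.Tendsto (fun n => (p n).2 i) Filter.atTop (nhds (a i)) := fun i =>
    (((continuous_apply i).comp continuous_snd).continuousAt.tendsto).comp hlim
  have hceil : ∀ i, ∀ᶠ n in Filter.atTop,
      (⌈(m:ℝ) * x i⌉ : ℝ) ≤ (⌈(m:ℝ) * (p n).1 i⌉ : ℝ) := by
    intro i
    have ht : Filter.Tendsto (fun n => (m:ℝ) * (p n).1 i) Filter.atTop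
        (nhds ((m:ℝ) * x i)) := (hx' i).const_mul _
    have hlt : (⌈(m:ℝ) * x i⌉ : ℝ) - 1 < (m:ℝ) * x i := by
      have := Int.ceil_lt_add_one ((m:ℝ) * x i); linarith
    filter_upwards [ht.eventually (eventually_gt_nhds hlt)] with n hn
    have h2 : (⌈(m:ℝ) * x i⌉ - 1 : ℤ) < ⌈(m:ℝ) * (p n).1 i⌉ := by
      rw [Int.lt_ceil]; push_cast; linarith
    have h3 : (⌈(m:ℝ) * x i⌉ : ℤ) ≤ ⌈(m:ℝ) * (p n).1 i⌉ := by omega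
    exact_mod_cast h3
  have hceilall : ∀ᶠ n in Filter.atTop, ∀ i,
      (⌈(m:ℝ) * x i⌉ : ℝ) ≤ (⌈(m:ℝ) * (p n).1 i⌉ : ℝ) :=
    Filter.eventually_all.2 hceil
  have hg : Filter.Tendsto
      (fun n => ∑ i, (1 + ((m:ℝ) - 1) * (p n).1 i - (⌈(m:ℝ) * x i⌉ : ℝ)) * (p n).2 i)
      Filter.atTop
      (nhds (∑ i, (1 + ((m:ℝ) - 1) * x i - (⌈(m:ℝ) * x i⌉ : ℝ)) * a i)) := by
    apply tendsto_finset_sum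
    intro i _
    exact ((((hx' i).const_mul _).const_add 1).sub tendsto_const_nhds).mul (ha' i)
  refine ge_of_tendsto hg ?_
  filter_upwards [hceilall] with n hn
  have h0 := (hp n).2.2 m
  calc (0:ℝ) ≤ ∑ i, (1 + ((m:ℝ) - 1) * (p n).1 i - (⌈(m:ℝ) * (p n).1 i⌉ : ℝ)) * (p n).2 i := h0
    _ ≤ ∑ i, (1 + ((m:ℝ) - 1) * (p n).1 i - (⌈(m:ℝ) * x i⌉ : ℝ)) * (p n).2 i := by
        apply Finset.sum_le_sum
        intro i _
        have hai : 0 ≤ (p n).2 i := (hA ((hp n).2.1 i)).1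
        have := hn i
        nlinarith
end

section
/- Let A ⊆ [0,1] with 1 ∈ A, assume A is a closed subset of ℝ, and let 1 ≤ s ≤ d−1. Then: (i) if a sequence (x^n, a^n) ∈ Ṽ_d(A) converges in ℝ^d × ℝ^d to a point ((x, 0, …, 0), (a, a_{s+1}, …, a_d)) with x ∈ (0,1]^s (the last d−s coordinates of the limit of x^n being 0), then (x, (a_1,…,a_s)) ∈ Ṽ_s(A); (ii) conversely, every (x,a) ∈ Ṽ_s(A) arises this way: ((x, 0, …, 0), (a, 1, …, 1)) is the limit of the sequence ((x, 1/n, …, 1/n), (a, 1, …, 1)) ∈ Ṽ_d(A). -/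
open Finset Filter in
/-- auxiliary: the `fract` form of the summand coefficient. -/
lemma toric_aux_coeff_eq (m : ℤ) (x : ℝ) :
    1 + ((m:ℝ) - 1) * x - (⌈(m:ℝ) * x⌉ : ℝ) = 1 - x - Int.fract (-((m:ℝ) * x)) := by
  rw [Int.fract, Int.floor_neg]
  push_cast
  ring

open Finset Filter in
/-- auxiliary: simultaneous Dirichlet-type recurrence by pigeonhole. -/
lemma toric_aux_dirichlet {s : ℕ} (y : Fin s → ℝ) {ε : ℝ} (hε : 0 < ε) :
    ∃ j : ℕ, 1 ≤ j ∧ ∀ i, ∃ n : ℤ, |(j:ℝ) * y i - n| < ε := by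
  obtain ⟨N, hN⟩ := exists_nat_one_div_lt hε
  set M := N + 1 with hM
  have hMpos : (0:ℝ) < M := by positivity
  set F : ℕ → (Fin s → ℕ) := fun r i => (⌊Int.fract ((r:ℝ) * y i) * M⌋).toNat with hF
  have key : ∀ (r : ℕ) (i : Fin s), (0:ℤ) ≤ ⌊Int.fract ((r:ℝ) * y i) * M⌋ ∧
      ⌊Int.fract ((r:ℝ) * y i) * M⌋ < (M:ℤ) := by
    intro r i
    constructor
    · apply Int.floor_nonneg.2
      have := Int.fract_nonneg ((r:ℝ) * y i); positivity
    · apply Int.floor_lt.2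
      have := Int.fract_lt_one ((r:ℝ) * y i)
      push_cast
      nlinarith
  have hmaps : ∀ r ∈ Finset.range (M ^ s + 1),
      F r ∈ Fintype.piFinset (fun _ : Fin s => Finset.range M) := by
    intro r _
    rw [Fintype.mem_piFinset]
    intro i
    rw [Finset.mem_range]
    have := key r i
    simp only [hF]
    omega
  have hcard : (Fintype.piFinset (fun _ : Fin s => Finset.range M)).card
      < (Finset.range (M ^ s + 1)).card := by
    rw [Finset.card_range, Fintype.card_piFinset]
    simp
  obtain ⟨r1, -, r2, -, hne, heq⟩ := Finset.exists_ne_map_eq_of_card_lt_of_maps_to hcard hmaps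
  wlog hgt : r2 < r1 generalizing r1 r2
  · exact this r2 r1 hne.symm heq.symm (by omega)
  refine ⟨r1 - r2, by omega, fun i => ?_⟩
  refine ⟨⌊(r1:ℝ) * y i⌋ - ⌊(r2:ℝ) * y i⌋, ?_⟩
  have hfl : ⌊Int.fract ((r1:ℝ) * y i) * M⌋ = ⌊Int.fract ((r2:ℝ) * y i) * M⌋ := by
    have h1 := (key r1 i).1
    have h2 := (key r2 i).1
    have := congrFun heq i
    simp only [hF] at this
    omega
  have hlt : |Int.fract ((r1:ℝ) * y i) - Int.fract ((r2:ℝ) * y i)| < 1 / M := by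
    rw [abs_sub_lt_iff]
    have a1 := Int.floor_le (Int.fract ((r1:ℝ) * y i) * M)
    have a2 := Int.lt_floor_add_one (Int.fract ((r1:ℝ) * y i) * M)
    have b1 := Int.floor_le (Int.fract ((r2:ℝ) * y i) * M)
    have b2 := Int.lt_floor_add_one (Int.fract ((r2:ℝ) * y i) * M)
    rw [hfl] at a1 a2
    constructor <;> rw [lt_div_iff₀ hMpos] <;> nlinarith
  have hsub : ((r1 - r2 : ℕ) : ℝ) * y i - ((⌊(r1:ℝ) * y i⌋ - ⌊(r2:ℝ) * y i⌋ : ℤ) : ℝ)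
      = Int.fract ((r1:ℝ) * y i) - Int.fract ((r2:ℝ) * y i) := by
    rw [Int.fract, Int.fract]
    push_cast [Nat.cast_sub (le_of_lt hgt)]
    ring
  have hM' : (1:ℝ)/M < ε := by rw [hM]; push_cast; exact hN
  rw [hsub]
  exact lt_trans hlt hM'

open Finset Filter in
/-- auxiliary: it suffices to check the constraints for positive `m`. -/
lemma toric_aux_all_m {s : ℕ} (x a : Fin s → ℝ) (ha : ∀ i, 0 ≤ a i)
    (h : ∀ m : ℤ, 1 ≤ m → 0 ≤ ∑ i, (1 + ((m:ℝ) - 1) * x i - (⌈(m:ℝ) * x i⌉ : ℝ)) * a i) :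
    ∀ m : ℤ, 0 ≤ ∑ i, (1 + ((m:ℝ) - 1) * x i - (⌈(m:ℝ) * x i⌉ : ℝ)) * a i := by
  intro m
  rcases le_or_gt 1 m with hm | hm
  · exact h m hm
  have hm0 : m ≤ 0 := by omega
  have hT : ∀ k : ℤ, ∑ i, (1 + ((k:ℝ) - 1) * x i - (⌈(k:ℝ) * x i⌉ : ℝ)) * a i
      = ∑ i, (1 - x i - Int.fract (-((k:ℝ) * x i))) * a i :=
    fun k => Finset.sum_congr rfl (fun i _ => by rw [toric_aux_coeff_eq])
  rw [hT]
  rcases Nat.eq_zero_or_pos s with hs0 | hs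
  · subst hs0; simp
  have hne : (Finset.univ : Finset (Fin s)).Nonempty := ⟨⟨0, hs⟩, mem_univ _⟩
  set u : Fin s → ℝ := fun i => Int.fract (-((m:ℝ) * x i)) with hu
  set S : ℝ := ∑ i, a i with hS
  have hSnn : 0 ≤ S := Finset.sum_nonneg (fun i _ => ha i)
  refine le_of_forall_pos_le_add (fun ε hε => ?_)
  set ε1 : ℝ := ε / (S + 1) with hε1
  have hε1pos : 0 < ε1 := by positivity
  set ε0 : ℝ := min ε1 (Finset.univ.inf' hne (fun i => 1 - u i)) with hε0
  have hε0pos : 0 < ε0 := by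
    apply lt_min hε1pos
    rw [Finset.lt_inf'_iff]
    intro i _
    have := Int.fract_lt_one (-((m:ℝ) * x i))
    simpa [hu] using by linarith [Int.fract_lt_one (-((m:ℝ) * x i))]
  have hε0le : ∀ i : Fin s, ε0 ≤ 1 - u i := fun i =>
    le_trans (min_le_right _ _) (Finset.inf'_le _ (mem_univ i))
  obtain ⟨j, hj1, hjn⟩ := toric_aux_dirichlet (fun i => (1 - (m:ℝ)) * x i) hε0pos
  set k : ℤ := m + (j : ℤ) * (1 - m) with hk
  have hk1 : 1 ≤ k := by
    have h1 : (0:ℤ) ≤ ((j:ℤ) - 1) * (1 - m) := by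
      apply mul_nonneg <;> omega
    nlinarith [h1]
  have key : ∀ i, u i - ε0 ≤ Int.fract (-((k:ℝ) * x i)) := by
    intro i
    obtain ⟨n, hn⟩ := hjn i
    set δ : ℝ := (j:ℝ) * ((1 - (m:ℝ)) * x i) - n with hδ
    have hδlt : |δ| < ε0 := hn
    have harg : -((k:ℝ) * x i) = (-((m:ℝ) * x i) - δ) - n := by
      rw [hδ, hk]
      push_cast
      ring
    have h2 : Int.fract (-((k:ℝ) * x i)) = Int.fract (u i - δ) := by
      rw [harg, Int.fract_sub_intCast]
      have : -((m:ℝ) * x i) - δ = (⌊-((m:ℝ) * x i)⌋ : ℤ) + (u i - δ) := by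
        have hui : u i = -((m:ℝ) * x i) - (⌊-((m:ℝ) * x i)⌋ : ℝ) := rfl
        rw [hui]; ring
      rw [this, Int.fract_intCast_add]
    rw [h2]
    rcases lt_or_ge 0 (u i - δ) with hc | hc
    · have hlt1 : u i - δ < 1 := by
        have := abs_lt.1 hδlt
        have := hε0le i
        linarith
      rw [Int.fract_eq_self.2 ⟨le_of_lt hc, hlt1⟩]
      have := abs_lt.1 hδlt
      linarith
    · have : u i < ε0 := by
        have := abs_lt.1 hδlt
        linarith
      have := Int.fract_nonneg (u i - δ)
      linarith
  have h0k := h k hk1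
  rw [hT k] at h0k
  have hsum : ∑ i, ((1 - x i - Int.fract (-((k:ℝ) * x i))) * a i - ε0 * a i)
      ≤ ∑ i, (1 - x i - u i) * a i := by
    apply Finset.sum_le_sum
    intro i _
    have h3 : (1 - x i - u i) ≥ (1 - x i - Int.fract (-((k:ℝ) * x i))) - ε0 := by
      have := key i; linarith
    have := mul_le_mul_of_nonneg_right h3 (ha i)
    nlinarith [ha i]
  rw [Finset.sum_sub_distrib, ← Finset.mul_sum, ← hS] at hsum
  have hε0S : ε0 * S ≤ ε := by
    have h4 : ε0 * S ≤ ε1 * S := mul_le_mul_of_nonneg_right (min_le_left _ _) hSnn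
    have h5 : ε1 * S ≤ ε := by
      rw [hε1, div_mul_eq_mul_div, div_le_iff₀ (by positivity)]
      nlinarith
    linarith
  linarith

open Finset Filter in
/-- auxiliary: a sum over `Fin d` splits into head and tail. -/
lemma toric_aux_sum_head_tail {s d : ℕ} (hsd : s ≤ d) (f : Fin d → ℝ) :
    ∑ i, f i = (∑ j : Fin s, f (Fin.castLE hsd j))
      + ∑ i ∈ Finset.univ.filter (fun i : Fin d => ¬ (i:ℕ) < s), f i := by
  rw [← Finset.sum_filter_add_sum_filter_not Finset.univ (fun i : Fin d => (i:ℕ) < s) f]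
  congr 1
  have hset : Finset.univ.filter (fun i : Fin d => (i:ℕ) < s)
      = Finset.univ.map (Fin.castLEEmb hsd) := by
    ext i
    simp only [Finset.mem_filter, Finset.mem_univ, true_and, Finset.mem_map,
      Fin.castLEEmb_apply]
    constructor
    · intro hi
      exact ⟨⟨i, hi⟩, rfl⟩
    · rintro ⟨j, rfl⟩
      simpa using j.2
  rw [hset, Finset.sum_map]
  rfl

open Finset Filter in
/-- auxiliary: the tail coefficient for `x = 1/(n+1)`, `a = 1` is nonnegative. -/
lemma toric_aux_tail_nonneg (m : ℤ) (n : ℕ) :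
    0 ≤ 1 + ((m:ℝ) - 1) * (1 / ((n:ℝ) + 1)) - (⌈(m:ℝ) * (1 / ((n:ℝ) + 1))⌉ : ℝ) := by
  set t : ℝ := 1 / ((n:ℝ) + 1) with ht
  have hn1 : (0:ℝ) < (n:ℝ) + 1 := by positivity
  have htn : t * ((n:ℝ) + 1) = 1 := by rw [ht]; field_simp
  set k : ℤ := ⌈(m:ℝ) * t⌉ with hk
  have hceil : (k:ℝ) < (m:ℝ) * t + 1 := Int.ceil_lt_add_one _
  have hR : ((k:ℝ) - 1) * ((n:ℝ) + 1) < (m:ℝ) := by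
    have := mul_lt_mul_of_pos_right (by linarith : (k:ℝ) - 1 < (m:ℝ) * t) hn1
    calc ((k:ℝ) - 1) * ((n:ℝ) + 1) < (m:ℝ) * t * ((n:ℝ)+1) := this
    _ = (m:ℝ) := by rw [mul_assoc, htn, mul_one]
  have hZ : (k - 1) * ((n:ℤ) + 1) < m := by exact_mod_cast hR
  have hZ' : k * ((n:ℤ) + 1) ≤ m + (n:ℤ) := by nlinarith
  have hR' : (k:ℝ) * ((n:ℝ) + 1) ≤ (m:ℝ) + (n:ℝ) := by exact_mod_cast hZ'
  have h2 : ((m:ℝ) - 1) * t * ((n:ℝ) + 1) = (m:ℝ) - 1 := by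
    rw [mul_assoc, htn, mul_one]
  nlinarith [h2, hR', hn1, htn]

/-- identifying `[0,1]^s` with the face `x_{s+1} = ⋯ = x_d = 0` of
`[0,1]^d`, and assuming `A` closed:
(i) if a sequence in `Ṽ_d(A)` converges to `((x,0,…,0),(a,a_{s+1},…,a_d))` with
`x ∈ (0,1]^s`, then `(x,(a_1,…,a_s)) ∈ Ṽ_s(A)`;
(ii) conversely, every `(x,a) ∈ Ṽ_s(A)` arises this way, as the limit of the
sequence `((x,1/n,…,1/n),(a,1,…,1)) ∈ Ṽ_d(A)`. -/
theorem toric_mld_stmt10 (A : Set ℝ) (hA : A ⊆ Set.Icc 0 1) (h1 : (1:ℝ) ∈ A)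
    (hclosed : IsClosed A) (s d : ℕ) (hs : 1 ≤ s) (hsd : s ≤ d - 1) (hd : 2 ≤ d) :
    (∀ p : ℕ → (Fin d → ℝ) × (Fin d → ℝ), (∀ n, p n ∈ Vtilde d A) →
      ∀ (x : Fin s → ℝ) (B : Fin d → ℝ), (∀ i, x i ∈ Set.Ioc (0:ℝ) 1) →
        Filter.Tendsto p Filter.atTop
          (nhds ((fun i : Fin d => if h : (i : ℕ) < s then x ⟨i, h⟩ else 0), B)) →
        (x, fun i : Fin s =>
            B ⟨i, lt_of_lt_of_le i.2 (le_trans hsd (Nat.sub_le d 1))⟩)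
          ∈ Vtilde s A) ∧
    (∀ x a : Fin s → ℝ, (x, a) ∈ Vtilde s A →
      (∀ n : ℕ, ((fun i : Fin d => if h : (i : ℕ) < s then x ⟨i, h⟩
                    else 1 / ((n : ℝ) + 1)),
                 (fun i : Fin d => if h : (i : ℕ) < s then a ⟨i, h⟩ else 1))
        ∈ Vtilde d A) ∧
      Filter.Tendsto (fun n : ℕ =>
          ((fun i : Fin d => if h : (i : ℕ) < s then x ⟨i, h⟩
              else 1 / ((n : ℝ) + 1)),
           (fun i : Fin d => if h : (i : ℕ) < s then a ⟨i, h⟩ else 1)))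
        Filter.atTop
        (nhds ((fun i : Fin d => if h : (i : ℕ) < s then x ⟨i, h⟩ else 0),
               (fun i : Fin d => if h : (i : ℕ) < s then a ⟨i, h⟩ else 1)))) := by
  have hsd' : s ≤ d := le_trans hsd (Nat.sub_le d 1)
  constructor
  · -- part (i)
    intro p hp x B hx htend
    set X : Fin d → ℝ := fun i : Fin d => if h : (i : ℕ) < s then x ⟨i, h⟩ else 0 with hX
    have hfst : Filter.Tendsto (fun n => (p n).1) Filter.atTop (nhds X) :=
      (continuous_fst.tendsto (X, B)).comp htend
    have hsnd : Filter.Tendsto (fun n => (p n).2) Filter.atTop (nhds B) :=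
      (continuous_snd.tendsto (X, B)).comp htend
    have hpt1 : ∀ i, Filter.Tendsto (fun n => (p n).1 i) Filter.atTop (nhds (X i)) :=
      fun i => tendsto_pi_nhds.1 hfst i
    have hpt2 : ∀ i, Filter.Tendsto (fun n => (p n).2 i) Filter.atTop (nhds (B i)) :=
      fun i => tendsto_pi_nhds.1 hsnd i
    have hBA : ∀ i : Fin d, B i ∈ A := fun i =>
      hclosed.mem_of_tendsto (hpt2 i) (Filter.Eventually.of_forall fun n => (hp n).2.1 i)
    have hB01 : ∀ i : Fin d, B i ∈ Set.Icc (0:ℝ) 1 := fun i => hA (hBA i)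
    have hXval : ∀ (i : Fin d) (h : (i:ℕ) < s), X i = x ⟨i, h⟩ := fun i h => dif_pos h
    have hXval0 : ∀ (i : Fin d), ¬ (i:ℕ) < s → X i = 0 := fun i h => dif_neg h
    have hpos : ∀ m : ℤ, 1 ≤ m → 0 ≤ ∑ i : Fin s,
        (1 + ((m:ℝ) - 1) * x i - (⌈(m:ℝ) * x i⌉ : ℝ)) * B (Fin.castLE hsd' i) := by
      intro m hm1
      set L : Fin d → ℝ := fun i => if h : (i:ℕ) < s
        then (1 + ((m:ℝ) - 1) * x ⟨i, h⟩ - (⌈(m:ℝ) * x ⟨i, h⟩⌉ : ℝ)) * B i else 0 with hL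
      set u : Fin d → ℕ → ℝ := fun i n => if h : (i:ℕ) < s
        then (1 + ((m:ℝ) - 1) * (p n).1 i - (⌈(m:ℝ) * x ⟨i, h⟩⌉ : ℝ)) * (p n).2 i
        else ((m:ℝ) - 1) * ((p n).1 i * (p n).2 i) with hu
      have hUL : Filter.Tendsto (fun n => ∑ i, u i n) Filter.atTop (nhds (∑ i, L i)) := by
        apply tendsto_finset_sum
        intro i _
        by_cases h : (i:ℕ) < s
        · simp only [hu, hL, dif_pos h]
          have h2 := ((((hpt1 i).const_mul ((m:ℝ) - 1)).const_add 1).sub_const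
            ((⌈(m:ℝ) * x ⟨i, h⟩⌉ : ℝ))).mul (hpt2 i)
          rw [hXval i h] at h2
          exact h2
        · simp only [hu, hL, dif_neg h]
          have h2 := ((hpt1 i).mul (hpt2 i)).const_mul ((m:ℝ) - 1)
          rw [hXval0 i h] at h2
          simpa using h2
      have hev : ∀ᶠ n in Filter.atTop, 0 ≤ ∑ i, u i n := by
        have hall : ∀ᶠ n in Filter.atTop, ∀ i : Fin d,
            (1 + ((m:ℝ) - 1) * (p n).1 i - (⌈(m:ℝ) * (p n).1 i⌉ : ℝ)) * (p n).2 i ≤ u i n := by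
          rw [Filter.eventually_all]
          intro i
          by_cases h : (i:ℕ) < s
          · have hlt : (⌈(m:ℝ) * x ⟨i, h⟩⌉ : ℝ) - 1 < (m:ℝ) * X i := by
              rw [hXval i h]
              linarith [Int.ceil_lt_add_one ((m:ℝ) * x ⟨i, h⟩)]
            filter_upwards [((hpt1 i).const_mul (m:ℝ)).eventually
              (eventually_gt_nhds hlt)] with n hn
            simp only [hu, dif_pos h]
            have hc2 : (⌈(m:ℝ) * x ⟨i, h⟩⌉ : ℝ) ≤ (⌈(m:ℝ) * (p n).1 i⌉ : ℝ) := by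
              have hz : (⌈(m:ℝ) * x ⟨i, h⟩⌉ : ℤ) - 1 < (⌈(m:ℝ) * (p n).1 i⌉ : ℤ) := by
                have := lt_of_lt_of_le hn (Int.le_ceil ((m:ℝ) * (p n).1 i))
                exact_mod_cast this
              have hz2 : (⌈(m:ℝ) * x ⟨i, h⟩⌉ : ℤ) ≤ (⌈(m:ℝ) * (p n).1 i⌉ : ℤ) := by omega
              exact_mod_cast hz2
            apply mul_le_mul_of_nonneg_right _ ((hA ((hp n).2.1 i)).1)
            linarith
          · apply Filter.Eventually.of_forall
            intro n
            simp only [hu, dif_neg h]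
            have hc1 : (1:ℝ) ≤ (⌈(m:ℝ) * (p n).1 i⌉ : ℝ) := by
              have hz : (0:ℤ) < ⌈(m:ℝ) * (p n).1 i⌉ := Int.ceil_pos.2 (by
                apply mul_pos _ ((hp n).1 i).1
                exact_mod_cast lt_of_lt_of_le Int.zero_lt_one hm1)
              exact_mod_cast hz
            have hmm := mul_le_mul_of_nonneg_right
              (show 1 + ((m:ℝ) - 1) * (p n).1 i - (⌈(m:ℝ) * (p n).1 i⌉ : ℝ)
                  ≤ ((m:ℝ) - 1) * (p n).1 i by linarith)
              ((hA ((hp n).2.1 i)).1)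
            calc (1 + ((m:ℝ) - 1) * (p n).1 i - (⌈(m:ℝ) * (p n).1 i⌉ : ℝ)) * (p n).2 i
                ≤ (((m:ℝ) - 1) * (p n).1 i) * (p n).2 i := hmm
              _ = ((m:ℝ) - 1) * ((p n).1 i * (p n).2 i) := by ring
        filter_upwards [hall] with n hn
        calc (0:ℝ) ≤ ∑ i, (1 + ((m:ℝ) - 1) * (p n).1 i
              - (⌈(m:ℝ) * (p n).1 i⌉ : ℝ)) * (p n).2 i := (hp n).2.2 m
          _ ≤ ∑ i, u i n := Finset.sum_le_sum (fun i _ => hn i)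
      have h0L : 0 ≤ ∑ i, L i := ge_of_tendsto hUL hev
      rw [toric_aux_sum_head_tail hsd' L] at h0L
      have htail0 : (∑ i ∈ Finset.univ.filter (fun i : Fin d => ¬ (i:ℕ) < s), L i) = 0 :=
        Finset.sum_eq_zero fun i hi => by
          simp only [hL]
          exact dif_neg (Finset.mem_filter.1 hi).2
      have hheadeq : (∑ j : Fin s, L (Fin.castLE hsd' j))
          = ∑ j : Fin s, (1 + ((m:ℝ) - 1) * x j - (⌈(m:ℝ) * x j⌉ : ℝ))
              * B (Fin.castLE hsd' j) :=
        Finset.sum_congr rfl fun j _ => by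
          simp only [hL]
          exact dif_pos j.2
      rw [htail0, hheadeq] at h0L
      simpa using h0L
    refine ⟨hx, fun i => hBA _, ?_⟩
    exact toric_aux_all_m x _ (fun i => (hB01 _).1) hpos
  · -- part (ii)
    intro x a hxa
    obtain ⟨hx, haA, hsum⟩ := hxa
    constructor
    · intro n
      refine ⟨?_, ?_, ?_⟩
      · intro i
        by_cases h : (i:ℕ) < s
        · simpa only [dif_pos h] using hx ⟨i, h⟩
        · simp only [dif_neg h]
          constructor
          · positivity
          · rw [div_le_one (by positivity)]
            linarith [Nat.cast_nonneg (α := ℝ) n]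
      · intro i
        by_cases h : (i:ℕ) < s
        · simpa only [dif_pos h] using haA ⟨i, h⟩
        · simpa only [dif_neg h] using h1
      · intro m
        rw [toric_aux_sum_head_tail hsd']
        refine add_nonneg ?_ (Finset.sum_nonneg fun i hi => ?_)
        · refine le_of_le_of_eq (hsum m) ?_
          refine Finset.sum_congr rfl fun j _ => ?_
          simp only [Fin.coe_castLE, dif_pos j.2, Fin.eta]
        · have hni := (Finset.mem_filter.1 hi).2
          simp only [dif_neg hni]
          simpa using toric_aux_tail_nonneg m n
    · refine Filter.Tendsto.prodMk_nhds ?_ tendsto_const_nhds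
      rw [tendsto_pi_nhds]
      intro i
      by_cases h : (i:ℕ) < s
      · simp only [dif_pos h]
        exact tendsto_const_nhds
      · simp only [dif_neg h]
        exact tendsto_one_div_add_atTop_nhds_zero_nat
end

section
/- Let A ⊆ [0,1] with 1 ∈ A. Let x ∈ (0,1]^d and a ∈ A^d with a_i > 0 for all 1 ≤ i ≤ d. Then there exists a relatively open neighborhood U of x in (0,1]^d such that: for every y ∈ U, if ⟨y^{(m)} − x, a⟩ ≥ 0 for every integer m, then ⟨y − x, a⟩ = 0. -/
open Finset in
/-- for `x ∈ (0,1]^d` and `a ∈ A^d` with all `a_i > 0`, there is a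
relatively open neighborhood `U` of `x` in `(0,1]^d` (i.e. `U = V ∩ (0,1]^d` with
`V` open) such that for every `y ∈ U`, if `⟨y^{(m)} - x, a⟩ ≥ 0` for every
integer `m`, then `⟨y - x, a⟩ = 0`.  Here `y^{(m)}_i = 1 + m y_i - ⌈m y_i⌉`. -/
theorem toric_mld_stmt11 (A : Set ℝ) (hA : A ⊆ Set.Icc 0 1) (h1 : (1:ℝ) ∈ A)
    (d : ℕ) (x a : Fin d → ℝ) (hx : ∀ i, x i ∈ Set.Ioc (0:ℝ) 1)
    (ha : ∀ i, a i ∈ A) (hapos : ∀ i, 0 < a i) :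
    ∃ V : Set (Fin d → ℝ), IsOpen V ∧ x ∈ V ∧
      ∀ y ∈ V, (∀ i, y i ∈ Set.Ioc (0:ℝ) 1) →
        (∀ m : ℤ,
          0 ≤ ∑ i, ((1 + (m:ℝ) * y i - (⌈(m:ℝ) * y i⌉ : ℝ)) - x i) * a i) →
        ∑ i, (y i - x i) * a i = 0 := by
  classical
  rcases Nat.eq_zero_or_pos d with hd0 | hd0
  · subst hd0
    exact ⟨Set.univ, isOpen_univ, Set.mem_univ _, fun y _ _ _ => by simp⟩
  haveI : Nonempty (Fin d) := ⟨⟨0, hd0⟩⟩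
  -- ceiling of a number in (0,1] is 1
  have hceil : ∀ t : ℝ, 0 < t → t ≤ 1 → (⌈t⌉ : ℤ) = 1 := by
    intro t h1t h2t
    have hle : ⌈t⌉ ≤ 1 := Int.ceil_le.mpr (by exact_mod_cast h2t)
    have hge : 0 < ⌈t⌉ := Int.ceil_pos.mpr h1t
    omega
  -- constants
  obtain ⟨c0, hc0pos, hc0le, hc0le1⟩ :
      ∃ c0 : ℝ, 0 < c0 ∧ (∀ i, c0 ≤ x i) ∧ c0 ≤ 1 := by
    refine ⟨Finset.univ.inf' Finset.univ_nonempty x, ?_, ?_, ?_⟩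
    · rw [Finset.lt_inf'_iff]
      exact fun i _ => (hx i).1
    · exact fun i => Finset.inf'_le _ (Finset.mem_univ i)
    · exact le_trans (Finset.inf'_le _ (Finset.mem_univ ⟨0, hd0⟩)) (hx ⟨0, hd0⟩).2
  obtain ⟨K, hKpos, hKsmall⟩ : ∃ K : ℕ, 0 < K ∧ 1/(K:ℝ) ≤ c0/8 := by
    refine ⟨⌈(8:ℝ)/c0⌉₊, Nat.ceil_pos.mpr (by positivity), ?_⟩
    have hKR : (8:ℝ)/c0 ≤ (⌈(8:ℝ)/c0⌉₊:ℝ) := Nat.le_ceil _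
    have hKposR : (0:ℝ) < (⌈(8:ℝ)/c0⌉₊:ℝ) := lt_of_lt_of_le (by positivity) hKR
    rw [div_le_div_iff₀ hKposR (by norm_num : (0:ℝ) < 8)]
    rw [div_le_iff₀ hc0pos] at hKR
    linarith
  have hKposR : (0:ℝ) < (K:ℝ) := by exact_mod_cast hKpos
  set M : ℕ := K ^ d with hMdef
  have hM1 : 1 ≤ M := Nat.one_le_pow _ _ hKpos
  set S : ℝ := ∑ i, x i * a i with hSdef
  set sa : ℝ := ∑ i, a i with hsadef
  have hsapos : 0 < sa := Finset.sum_pos (fun i _ => hapos i) Finset.univ_nonempty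
  -- finite set of candidate values
  set T : Finset ℝ := Finset.image
      (fun qp : Fin M × (Fin d → Fin (M+1)) =>
        (∑ i, ((qp.2 i : ℕ) : ℝ) * a i) - (((qp.1 : ℕ) : ℝ) + 1) * S)
      Finset.univ with hTdef
  obtain ⟨gap, hgappos, hgaple⟩ :
      ∃ gap : ℝ, 0 < gap ∧ ∀ r ∈ T, 0 < r → gap ≤ r := by
    set P : Finset ℝ := T.filter (fun r => 0 < r) with hPdef
    have hPpos : ∀ r ∈ P, 0 < r := fun r hr => (Finset.mem_filter.mp hr).2
    by_cases h : P.Nonempty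
    · exact ⟨P.min' h, hPpos _ (Finset.min'_mem P h),
        fun r hrT hr => Finset.min'_le _ _ (Finset.mem_filter.mpr ⟨hrT, hr⟩)⟩
    · refine ⟨1, one_pos, fun r hrT hr => absurd ⟨r, Finset.mem_filter.mpr ⟨hrT, hr⟩⟩ h⟩
  set δ : ℝ := min (c0/4) (gap / (((M:ℝ)+1) * (sa+1))) with hδdef
  have hδpos : 0 < δ := by
    apply lt_min (by positivity)
    apply div_pos hgappos
    positivity
  have hδc : δ ≤ c0/4 := min_le_left _ _
  have hδgap : δ * (((M:ℝ)+1) * (sa+1)) ≤ gap := by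
    have h := min_le_right (c0/4) (gap / (((M:ℝ)+1) * (sa+1)))
    rw [le_div_iff₀ (by positivity : (0:ℝ) < ((M:ℝ)+1) * (sa+1))] at h
    exact h
  -- the neighborhood
  refine ⟨Set.pi Set.univ (fun i => Set.Ioo (x i - δ) (x i + δ)),
    isOpen_set_pi Set.finite_univ (fun i _ => isOpen_Ioo), ?_, ?_⟩
  · rw [Set.mem_pi]
    exact fun i _ => ⟨by linarith, by linarith⟩
  intro y hyV hyB hy
  have hyδ : ∀ i, |y i - x i| < δ := by
    intro i
    have := (Set.mem_pi.mp hyV) i (Set.mem_univ i)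
    rw [abs_lt]
    exact ⟨by linarith [this.1], by linarith [this.2]⟩
  set ε : ℝ := ∑ i, (y i - x i) * a i with hεdef
  -- m = 1 gives ε ≥ 0
  have hε0 : 0 ≤ ε := by
    have h := hy 1
    have hterm : ∀ i, ((1 + ((1:ℤ):ℝ) * y i - (⌈((1:ℤ):ℝ) * y i⌉ : ℝ)) - x i) * a i
        = (y i - x i) * a i := by
      intro i
      have h1' : ((1:ℤ):ℝ) * y i = y i := by push_cast; ring
      rw [h1', hceil (y i) (hyB i).1 (hyB i).2]
      push_cast; ring
    rw [Finset.sum_congr rfl (fun i _ => hterm i)] at h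
    exact h
  -- it suffices to rule out ε > 0
  by_contra hne
  have hεpos : 0 < ε := lt_of_le_of_ne hε0 (Ne.symm hne)
  -- key walking lemma
  have hkey : ∀ (q' : ℤ) (p' : Fin d → ℤ), (∀ i, |(q':ℝ) * y i - (p' i:ℝ)| ≤ c0/8) →
      0 ≤ ε + 2 * ∑ i, ((q':ℝ) * y i - (p' i:ℝ)) * a i := by
    intro q' p' hθ
    have hterm : ∀ i, (1 + ((1 + 2*q' : ℤ):ℝ) * y i - (⌈((1 + 2*q' : ℤ):ℝ) * y i⌉ : ℝ)) - x i
        ≤ (y i - x i) + 2 * ((q':ℝ) * y i - (p' i:ℝ)) := by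
      intro i
      have h2 := abs_le.mp (hθ i)
      have h3 := abs_lt.mp (hyδ i)
      have h4 := hc0le i
      have h5 := (hyB i).2
      by_cases hc : 1 < y i + 2 * ((q':ℝ) * y i - (p' i:ℝ))
      · -- wrap-around: the representative is w - 1
        have hz0 : 0 < (y i + 2 * ((q':ℝ) * y i - (p' i:ℝ))) - 1 := by linarith
        have hz1' : (y i + 2 * ((q':ℝ) * y i - (p' i:ℝ))) - 1 ≤ 1 := by linarith
        have hmy : ((1 + 2*q' : ℤ):ℝ) * y i
            = ((y i + 2 * ((q':ℝ) * y i - (p' i:ℝ))) - 1) + ((2 * p' i + 1 : ℤ):ℝ) := by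
          push_cast; ring
        rw [hmy, Int.ceil_add_intCast, hceil _ hz0 hz1']
        push_cast
        linarith
      · -- no wrap
        have hz0 : 0 < y i + 2 * ((q':ℝ) * y i - (p' i:ℝ)) := by linarith
        have hz1' : y i + 2 * ((q':ℝ) * y i - (p' i:ℝ)) ≤ 1 := not_lt.mp hc
        have hmy : ((1 + 2*q' : ℤ):ℝ) * y i
            = (y i + 2 * ((q':ℝ) * y i - (p' i:ℝ))) + ((2 * p' i : ℤ):ℝ) := by
          push_cast; ring
        rw [hmy, Int.ceil_add_intCast, hceil _ hz0 hz1']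
        push_cast
        linarith
    have h := hy (1 + 2*q')
    have hchain : ∑ i, ((1 + ((1 + 2*q' : ℤ):ℝ) * y i - (⌈((1 + 2*q' : ℤ):ℝ) * y i⌉ : ℝ)) - x i) * a i
        ≤ ∑ i, ((y i - x i) + 2 * ((q':ℝ) * y i - (p' i:ℝ))) * a i :=
      Finset.sum_le_sum (fun i _ => mul_le_mul_of_nonneg_right (hterm i) (hapos i).le)
    have heq2 : ∑ i, ((y i - x i) + 2 * ((q':ℝ) * y i - (p' i:ℝ))) * a i
        = ε + 2 * ∑ i, ((q':ℝ) * y i - (p' i:ℝ)) * a i := by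
      rw [hεdef, Finset.mul_sum, ← Finset.sum_add_distrib]
      exact Finset.sum_congr rfl (fun i _ => by ring)
    linarith
  -- Dirichlet pigeonhole
  obtain ⟨q, hq1, hqM, p, hp⟩ :
      ∃ q : ℕ, 1 ≤ q ∧ q ≤ M ∧ ∃ p : Fin d → ℤ, ∀ i, |(q:ℝ) * y i - (p i:ℝ)| ≤ c0/8 := by
    have hFlt : ∀ (jj : Fin (M+1)) (i : Fin d),
        (⌊(K:ℝ) * Int.fract ((jj.1:ℝ) * y i)⌋).toNat < K := by
      intro jj i
      have h1 : (K:ℝ) * Int.fract ((jj.1:ℝ) * y i) < (K:ℝ) * 1 :=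
        mul_lt_mul_of_pos_left (Int.fract_lt_one _) hKposR
      have h2 : ⌊(K:ℝ) * Int.fract ((jj.1:ℝ) * y i)⌋ < (K:ℤ) :=
        Int.floor_lt.mpr (by rw [mul_one] at h1; exact_mod_cast h1)
      omega
    have hcard : Fintype.card (Fin d → Fin K) < Fintype.card (Fin (M+1)) := by
      rw [Fintype.card_fun, Fintype.card_fin, Fintype.card_fin, Fintype.card_fin, hMdef]
      exact Nat.lt_succ_self _
    obtain ⟨j, j', hne', heq⟩ := Fintype.exists_ne_map_eq_of_card_lt
      (fun jj : Fin (M+1) => fun i => (⟨_, hFlt jj i⟩ : Fin K)) hcard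
    have aux : ∀ (j j' : Fin (M+1)), j.1 < j'.1 →
        (∀ i, (⌊(K:ℝ) * Int.fract ((j.1:ℝ) * y i)⌋).toNat
            = (⌊(K:ℝ) * Int.fract ((j'.1:ℝ) * y i)⌋).toNat) →
        ∃ q : ℕ, 1 ≤ q ∧ q ≤ M ∧ ∃ p : Fin d → ℤ, ∀ i, |(q:ℝ) * y i - (p i:ℝ)| ≤ c0/8 := by
      intro j j' hlt heqF
      refine ⟨j'.1 - j.1, by omega, by have := j'.2; omega,
        fun i => ⌊(j'.1:ℝ) * y i⌋ - ⌊(j.1:ℝ) * y i⌋, ?_⟩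
      intro i
      have hnn1 : 0 ≤ ⌊(K:ℝ) * Int.fract ((j.1:ℝ) * y i)⌋ :=
        Int.floor_nonneg.mpr (mul_nonneg hKposR.le (Int.fract_nonneg _))
      have hnn2 : 0 ≤ ⌊(K:ℝ) * Int.fract ((j'.1:ℝ) * y i)⌋ :=
        Int.floor_nonneg.mpr (mul_nonneg hKposR.le (Int.fract_nonneg _))
      have hfl : ⌊(K:ℝ) * Int.fract ((j.1:ℝ) * y i)⌋ = ⌊(K:ℝ) * Int.fract ((j'.1:ℝ) * y i)⌋ := by
        have := heqF i
        omega
      have A1 := Int.floor_le ((K:ℝ) * Int.fract ((j.1:ℝ) * y i))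
      have A2 := Int.lt_floor_add_one ((K:ℝ) * Int.fract ((j.1:ℝ) * y i))
      have B1 := Int.floor_le ((K:ℝ) * Int.fract ((j'.1:ℝ) * y i))
      have B2 := Int.lt_floor_add_one ((K:ℝ) * Int.fract ((j'.1:ℝ) * y i))
      rw [hfl] at A1 A2
      have hd1 : |Int.fract ((j'.1:ℝ) * y i) - Int.fract ((j.1:ℝ) * y i)| < 1/(K:ℝ) := by
        have hre1 : (Int.fract ((j'.1:ℝ) * y i) - Int.fract ((j.1:ℝ) * y i)) * (K:ℝ)
            = (K:ℝ) * Int.fract ((j'.1:ℝ) * y i) - (K:ℝ) * Int.fract ((j.1:ℝ) * y i) := by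
          ring
        rw [abs_lt]
        constructor
        · rw [show -(1/(K:ℝ)) = (-1)/(K:ℝ) by ring, div_lt_iff₀ hKposR]
          linarith
        · rw [lt_div_iff₀ hKposR]
          linarith
      have hqval : ((j'.1 - j.1 : ℕ):ℝ) * y i - ((⌊(j'.1:ℝ) * y i⌋ - ⌊(j.1:ℝ) * y i⌋ : ℤ):ℝ)
          = Int.fract ((j'.1:ℝ) * y i) - Int.fract ((j.1:ℝ) * y i) := by
        rw [Int.fract, Int.fract]
        push_cast [Nat.cast_sub (le_of_lt hlt)]
        ring
      rw [hqval]
      exact le_trans (le_of_lt hd1) hKsmall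
    have heqF : ∀ (i : Fin d), (⌊(K:ℝ) * Int.fract ((j.1:ℝ) * y i)⌋).toNat
        = (⌊(K:ℝ) * Int.fract ((j'.1:ℝ) * y i)⌋).toNat := by
      intro i
      have := congrFun heq i
      exact congrArg Fin.val this
    rcases lt_or_gt_of_ne (fun h : j.1 = j'.1 => hne' (Fin.ext h)) with h | h
    · exact aux j j' h heqF
    · exact aux j' j h (fun i => (heqF i).symm)
  have hq1R : (1:ℝ) ≤ (q:ℝ) := by exact_mod_cast hq1
  have hqMR : (q:ℝ) ≤ (M:ℝ) := by exact_mod_cast hqM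
  have hc08 : c0/8 ≤ 1/8 := by linarith
  -- bounds on p
  have hp0 : ∀ i, 0 ≤ p i := by
    intro i
    have h := abs_le.mp (hp i)
    have hqy : 0 < (q:ℝ) * y i := mul_pos (by linarith) (hyB i).1
    have h2 : (-1:ℝ) < (p i:ℝ) := by linarith
    have h3 : (-1:ℤ) < p i := by exact_mod_cast h2
    omega
  have hpM : ∀ i, p i ≤ (M:ℤ) := by
    intro i
    have h := abs_le.mp (hp i)
    have hqy : (q:ℝ) * y i ≤ (q:ℝ) :=
      mul_le_of_le_one_right (by linarith) (hyB i).2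
    have h2 : (p i:ℝ) < (q:ℝ) + 1 := by linarith
    have h3 : p i < (q:ℤ) + 1 := by exact_mod_cast h2
    have h4 : (q:ℤ) ≤ (M:ℤ) := by exact_mod_cast hqM
    omega
  set σ : ℝ := ∑ i, ((q:ℝ) * y i - (p i:ℝ)) * a i with hσdef
  have h1' : 0 ≤ ε + 2 * σ := by
    have h := hkey (q:ℤ) p (fun i => by push_cast; exact hp i)
    have he : ∑ i, (((q:ℤ):ℝ) * y i - (p i:ℝ)) * a i = σ := by
      rw [hσdef]
      exact Finset.sum_congr rfl (fun i _ => by push_cast; ring)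
    rw [he] at h
    exact h
  have h2' : 0 ≤ ε - 2 * σ := by
    have h := hkey (-(q:ℤ)) (fun i => -(p i)) (by
      intro i
      push_cast
      rw [show -(q:ℝ) * y i - -(p i:ℝ) = -((q:ℝ) * y i - (p i:ℝ)) by ring, abs_neg]
      exact hp i)
    push_cast at h
    have he : ∑ i : Fin d, (-(q:ℝ) * y i - -((p i):ℝ)) * a i = -σ := by
      rw [hσdef, ← Finset.sum_neg_distrib]
      exact Finset.sum_congr rfl (fun i _ => by ring)
    rw [he] at h
    linarith
  -- the pinned value
  set W : ℝ := (∑ i, (p i : ℝ) * a i) - (q:ℝ) * S with hWdef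
  have hWσ : W = (q:ℝ) * ε - σ := by
    rw [hWdef, hσdef, hεdef, hSdef, Finset.mul_sum, Finset.mul_sum,
      ← Finset.sum_sub_distrib, ← Finset.sum_sub_distrib]
    exact Finset.sum_congr rfl (fun i _ => by ring)
  have hqε1 : ε ≤ (q:ℝ) * ε := le_mul_of_one_le_left hεpos.le hq1R
  have hqε2 : (q:ℝ) * ε ≤ (M:ℝ) * ε := mul_le_mul_of_nonneg_right hqMR hεpos.le
  have hWpos : 0 < W := by
    rw [hWσ]
    linarith
  have hWle : W ≤ ((M:ℝ)+1) * ε := by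
    rw [hWσ]
    linarith
  have hWT : W ∈ T := by
    rw [hTdef]
    refine Finset.mem_image.mpr ⟨(⟨q - 1, by omega⟩,
      fun i => ⟨(p i).toNat, by have := hpM i; omega⟩), Finset.mem_univ _, ?_⟩
    have e1 : ∀ i, (((p i).toNat : ℕ):ℝ) = ((p i):ℝ) := by
      intro i
      exact_mod_cast congrArg (Int.cast : ℤ → ℝ) (Int.toNat_of_nonneg (hp0 i))
    have e2 : (((q - 1 : ℕ) : ℝ) + 1) = (q:ℝ) := by
      push_cast [Nat.cast_sub hq1]
      ring
    simp only
    rw [Finset.sum_congr rfl (fun i _ => by rw [e1 i]), e2, hWdef]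
  have hgapW : gap ≤ W := hgaple W hWT hWpos
  have hεδ : ε ≤ δ * sa := by
    rw [hεdef, hsadef, Finset.mul_sum]
    apply Finset.sum_le_sum
    intro i _
    apply mul_le_mul_of_nonneg_right _ (hapos i).le
    exact le_trans (le_abs_self _) (hyδ i).le
  have hA2 : W ≤ ((M:ℝ)+1) * (δ * sa) := by
    apply le_trans hWle
    apply mul_le_mul_of_nonneg_left hεδ (by positivity)
  have hB2 : ((M:ℝ)+1) * (δ * sa) < δ * (((M:ℝ)+1) * (sa+1)) := by
    have hδM : 0 < δ * ((M:ℝ)+1) := mul_pos hδpos (by positivity)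
    nlinarith
  linarith
end

section
/- Let A ⊆ [0,1] with 1 ∈ A, and assume A has no positive accumulation points in ℝ. Then for every d ≥ 1, the set of accumulation points of {⟨x,a⟩ : (x,a) ∈ Ṽ_d(A)} equals {0} ∪ ∪_{1 ≤ d' ≤ d−1} {⟨x,a⟩ : (x,a) ∈ Ṽ_{d'}(A)} (for d = 1 this set is {0}). -/
/-- The set of accumulation points of a set `S` of reals: points `r` such that
every neighborhood of `r` contains a point of `S` different from `r`. -/
def accPts (S : Set ℝ) : Set ℝ := {r | ∀ U ∈ nhds r, ∃ s ∈ S, s ≠ r ∧ s ∈ U}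

/-!
Write `upperFract θ = 1 + θ - ⌈θ⌉ ∈ (0, 1]`; then `(x, a) ∈ Ṽ_d(A)` says
`∑ x_i a_i ≤ ∑ upperFract (m x_i) a_i` for every `m ∈ ℤ`.

Padding a point of `Ṽ_{d'}(A)` with `d - d'` coordinates `(1/q, 1)` adds `(d - d')/q` to its
value, which gives `⊇`. Conversely, let `r ≠ 0` be a limit of values `r_n ≠ r` of points
`(x_n, a_n)` of `Ṽ_d(A)`, converging to `(X, w)`. As `A` has no positive accumulation point,
`a_n = w` eventually on the support of `w`. If some `X_i w_i` vanishes, the remaining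
coordinates still satisfy the inequalities, by upper semicontinuity of `upperFract` for
`m ≥ 1`, and for all `m` because the `N` with `N X` close to `ℤ^d` have bounded gaps.
Otherwise `x_n = X + c_n u_n` with `c_n → 0⁺` and `u_n → U ≠ 0`, and the inequalities hold
for `m X + τ U` for every real `τ`. This forces `∑ U_i w_i = 0`, and moving from `X` along
`-U` until a coordinate vanishes yields a point with the same value and fewer coordinates.
-/

open Finset Filter Topology

noncomputable def upperFract (θ : ℝ) : ℝ := 1 + θ - ⌈θ⌉

lemma upperFract_pos (θ : ℝ) : 0 < upperFract θ := by
  have := Int.ceil_lt_add_one θ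
  unfold upperFract; linarith

lemma upperFract_le_one (θ : ℝ) : upperFract θ ≤ 1 := by
  have := Int.le_ceil θ
  unfold upperFract; linarith

lemma upperFract_sub_intCast (θ : ℝ) (k : ℤ) : upperFract (θ - k) = upperFract θ := by
  simp only [upperFract, Int.ceil_sub_intCast, Int.cast_sub]; ring

lemma upperFract_le_self {θ : ℝ} (hθ : 0 < θ) : upperFract θ ≤ θ := by
  have : (1 : ℝ) ≤ ⌈θ⌉ := by exact_mod_cast Int.ceil_pos.mpr hθ
  unfold upperFract; linarith

lemma upperFract_lt_self {θ : ℝ} (hθ : 1 < θ) : upperFract θ < θ := by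
  have : (1 : ℤ) < ⌈θ⌉ := Int.lt_ceil.mpr (by exact_mod_cast hθ)
  have : (2 : ℝ) ≤ ⌈θ⌉ := by exact_mod_cast this
  unfold upperFract; linarith

lemma inv_le_upperFract_mul_inv {q : ℕ} (hq : 0 < q) (m : ℤ) :
    (q : ℝ)⁻¹ ≤ upperFract (m * (q : ℝ)⁻¹) := by
  have hq' : (0 : ℝ) < q := by exact_mod_cast hq
  -- `q * upperFract (m / q)` is a positive integer
  have hint : (q : ℝ) * upperFract (m * (q : ℝ)⁻¹) = ((q + m - q * ⌈m * (q : ℝ)⁻¹⌉ : ℤ) : ℝ) := by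
    unfold upperFract; push_cast; field_simp
  have hpos : (0 : ℤ) < q + m - q * ⌈m * (q : ℝ)⁻¹⌉ := by
    have := mul_pos hq' (upperFract_pos (m * (q : ℝ)⁻¹))
    rw [hint] at this; exact_mod_cast this
  have hone : (1 : ℝ) ≤ (q : ℝ) * upperFract (m * (q : ℝ)⁻¹) := by
    rw [hint]; exact_mod_cast hpos
  rw [inv_le_iff_one_le_mul₀ hq', mul_comm]; exact hone

lemma upperSemicontinuous_upperFract : UpperSemicontinuous upperFract := by
  intro θ y hy
  have hceil : ∀ᶠ θ' in 𝓝 θ, (⌈θ⌉ : ℝ) ≤ ⌈θ'⌉ := by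
    filter_upwards [Ioi_mem_nhds (show (⌈θ⌉ : ℝ) - 1 < θ by linarith [Int.ceil_lt_add_one θ])]
      with θ' hθ'
    exact_mod_cast Int.le_ceil_iff.mpr (by exact_mod_cast hθ')
  have hlin : ∀ᶠ θ' in 𝓝 θ, 1 + θ' - ⌈θ⌉ < y :=
    (continuous_const.add continuous_id |>.sub continuous_const).continuousAt.eventually_lt
      continuousAt_const hy
  filter_upwards [hceil, hlin] with θ' h₁ h₂
  unfold upperFract; linarith

def IsAdmissible {ι : Type*} (J : Finset ι) (x a : ι → ℝ) : Prop :=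
  ∀ m : ℤ, ∑ j ∈ J, x j * a j ≤ ∑ j ∈ J, upperFract (m * x j) * a j

def vtildeValues (d : ℕ) (A : Set ℝ) : Set ℝ := {r | ∃ p ∈ Vtilde d A, r = ∑ i, p.1 i * p.2 i}

lemma mem_Vtilde_iff {d : ℕ} {A : Set ℝ} {p : (Fin d → ℝ) × (Fin d → ℝ)} :
    p ∈ Vtilde d A ↔ (∀ i, p.1 i ∈ Set.Ioc 0 1) ∧ (∀ i, p.2 i ∈ A) ∧ IsAdmissible univ p.1 p.2 := by
  have key : ∀ m : ℤ, ∑ i, (1 + ((m : ℝ) - 1) * p.1 i - (⌈(m : ℝ) * p.1 i⌉ : ℝ)) * p.2 i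
      = ∑ i, upperFract (m * p.1 i) * p.2 i - ∑ i, p.1 i * p.2 i := by
    intro m
    rw [← sum_sub_distrib]
    exact sum_congr rfl fun i _ => by unfold upperFract; ring
  simp only [Vtilde, IsAdmissible, Set.mem_ofPred_eq, key, sub_nonneg]

lemma sum_mul_mem_vtildeValues {ι : Type*} [Fintype ι] {A : Set ℝ} {x a : ι → ℝ}
    (hx : ∀ i, x i ∈ Set.Ioc 0 1) (ha : ∀ i, a i ∈ A) (hadm : IsAdmissible univ x a) :
    ∑ i, x i * a i ∈ vtildeValues (Fintype.card ι) A := by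
  let e := (Fintype.equivFin ι).symm
  have hsum : ∀ f : ι → ℝ, ∑ i, f (e i) = ∑ i, f i := fun f => e.sum_comp f
  refine ⟨(x ∘ e, a ∘ e), mem_Vtilde_iff.mpr ⟨fun i => hx _, fun i => ha _, fun m => ?_⟩,
    (hsum fun i => x i * a i).symm⟩
  simpa only [Function.comp_apply, hsum (fun i => x i * a i),
    hsum (fun i => upperFract (m * x i) * a i)] using hadm m

lemma sum_mul_mem_vtildeValues_card {ι : Type*} {A : Set ℝ} {J : Finset ι}
    {x a : ι → ℝ} (hx : ∀ j ∈ J, x j ∈ Set.Ioc 0 1) (ha : ∀ j ∈ J, a j ∈ A)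
    (hadm : IsAdmissible J x a) : ∑ j ∈ J, x j * a j ∈ vtildeValues J.card A := by
  have h := sum_mul_mem_vtildeValues (x := fun j : J => x j) (a := fun j : J => a j)
    (A := A) (fun j => hx j j.2) (fun j => ha j j.2) fun m => by
      simpa only [univ_eq_attach, sum_attach J (fun j => x j * a j),
        sum_attach J (fun j => upperFract (m * x j) * a j)] using hadm m
  rwa [Fintype.card_coe, univ_eq_attach, sum_attach J (fun j => x j * a j)] at h

lemma zero_mem_vtildeValues_zero (A : Set ℝ) : (0 : ℝ) ∈ vtildeValues 0 A :=
  ⟨(Fin.elim0, Fin.elim0), ⟨(·.elim0), (·.elim0), fun m => by simp⟩, by simp⟩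

lemma add_mem_vtildeValues {A : Set ℝ} (h1 : (1 : ℝ) ∈ A) {d d' : ℕ} (hd : d' ≤ d) {v : ℝ}
    (hv : v ∈ vtildeValues d' A) {q : ℕ} (hq : 0 < q) :
    v + (d - d' : ℕ) / q ∈ vtildeValues d A := by
  obtain ⟨p, hp, rfl⟩ := hv
  obtain ⟨hx, ha, hadm⟩ := mem_Vtilde_iff.mp hp
  have hq' : (0 : ℝ) < q := by exact_mod_cast hq
  have hcard : Fintype.card (Fin d' ⊕ Fin (d - d')) = d := by simp only [Fintype.card_sum, Fintype.card_fin]; omega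
  have h := sum_mul_mem_vtildeValues (ι := Fin d' ⊕ Fin (d - d')) (A := A)
    (x := Sum.elim p.1 fun _ => (q : ℝ)⁻¹) (a := Sum.elim p.2 fun _ => 1)
    (by rintro (i | i); exacts [hx i, ⟨inv_pos.mpr hq', inv_le_one_of_one_le₀ (mod_cast hq)⟩])
    (by rintro (i | i); exacts [ha i, h1]) fun m => by
      simp only [Fintype.sum_sum_type, Sum.elim_inl, Sum.elim_inr, mul_one, sum_const, card_univ,
        Fintype.card_fin, nsmul_eq_mul]
      exact add_le_add (hadm m) (by gcongr; exact inv_le_upperFract_mul_inv hq m)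
  rw [hcard] at h
  simpa [Fintype.sum_sum_type, div_eq_mul_inv] using h

lemma mem_accPts_vtildeValues {A : Set ℝ} (h1 : (1 : ℝ) ∈ A) {d d' : ℕ} (hd : d' < d) {v : ℝ}
    (hv : v ∈ vtildeValues d' A) : v ∈ accPts (vtildeValues d A) := by
  intro U hU
  have hc : (0 : ℝ) < (d - d' : ℕ) := by exact_mod_cast Nat.sub_pos_of_lt hd
  have hlim : Tendsto (fun q : ℕ => v + (d - d' : ℕ) / q) atTop (𝓝 v) := by
    simpa using tendsto_const_nhds.add (tendsto_const_div_atTop_nhds_zero_nat ((d - d' : ℕ) : ℝ))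
  obtain ⟨q, hqU, hq⟩ := ((hlim.eventually hU).and (eventually_gt_atTop 0)).exists
  refine ⟨_, add_mem_vtildeValues h1 hd.le hv hq, ?_, hqU⟩
  have : (0 : ℝ) < (d - d' : ℕ) / q := div_pos hc (by exact_mod_cast hq)
  linarith

lemma eventually_eq_of_tendsto_of_notMem_accPts {α : Type*} {l : Filter α} {S : Set ℝ}
    {f : α → ℝ} {y : ℝ} (hS : ∀ t, f t ∈ S) (hf : Tendsto f l (𝓝 y)) (hy : y ∉ accPts S) :
    ∀ᶠ t in l, f t = y := by
  simp only [accPts, Set.mem_ofPred_eq, not_forall, not_exists, not_and] at hy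
  obtain ⟨U, hU, hUy⟩ := hy
  filter_upwards [hf hU] with t ht
  by_contra hne
  exact hUy _ (hS t) hne ht

lemma exists_seq_tendsto_of_mem_accPts {S : Set ℝ} {r : ℝ} (hr : r ∈ accPts S) :
    ∃ s : ℕ → ℝ, (∀ n, s n ∈ S ∧ s n ≠ r) ∧ Tendsto s atTop (𝓝 r) := by
  have : r ∈ closure (S \ {r}) := mem_closure_iff_nhds.mpr fun U hU => by
    obtain ⟨s, hs, hsr, hsU⟩ := hr U hU
    exact ⟨s, hsU, hs, hsr⟩
  exact mem_closure_iff_seq_limit.mp this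

lemma exists_ultrafilter_le_tendsto {α E : Type*} [TopologicalSpace E] {l : Filter α} [l.NeBot]
    {K : Set E} (hK : IsCompact K) {f : α → E} (hf : ∀ᶠ t in l, f t ∈ K) :
    ∃ U : Ultrafilter α, ↑U ≤ l ∧ ∃ y ∈ K, Tendsto f U (𝓝 y) := by
  let U := Ultrafilter.of l
  obtain ⟨y, hy, hlim⟩ := hK.ultrafilter_le_nhds' (U.map f) (Ultrafilter.of_le l hf)
  exact ⟨U, Ultrafilter.of_le l, y, hy, hlim⟩

lemma le_sum_of_forall_eventually_lt {α ι : Type*} {l : Filter α} [l.NeBot] {s : α → ℝ} {r : ℝ}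
    (hs : Tendsto s l (𝓝 r)) {J : Finset ι} {f : α → ι → ℝ} {g : ι → ℝ}
    (hle : ∀ᶠ t in l, s t ≤ ∑ j ∈ J, f t j) (hf : ∀ j ∈ J, ∀ ε > 0, ∀ᶠ t in l, f t j < g j + ε) :
    r ≤ ∑ j ∈ J, g j := by
  refine le_of_forall_pos_le_add fun ε hε => le_of_tendsto hs ?_
  have hε' : 0 < ε / (J.card + 1) := by positivity
  filter_upwards [hle, (eventually_all_finset J).mpr fun j hj => hf j hj _ hε'] with t h1 h2
  calc s t ≤ ∑ j ∈ J, f t j := h1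
    _ ≤ ∑ j ∈ J, (g j + ε / (J.card + 1)) := sum_le_sum fun j hj => (h2 j hj).le
    _ = ∑ j ∈ J, g j + J.card * (ε / (J.card + 1)) := by
      rw [sum_add_distrib, sum_const, nsmul_eq_mul]
    _ ≤ ∑ j ∈ J, g j + ε := by
      gcongr
      rw [mul_div_assoc', div_le_iff₀ (by positivity)]
      nlinarith

lemma upperSemicontinuous_upperFract_mul {w : ℝ} (hw : 0 ≤ w) :
    UpperSemicontinuous fun θ => upperFract θ * w :=
  (continuous_mul_const w).comp_upperSemicontinuous upperSemicontinuous_upperFract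
    (monotone_mul_right_of_nonneg hw)

lemma exists_forall_sum_upperFract_lt {ι : Type*} [Fintype ι] {J : Finset ι} {w : ι → ℝ}
    (hw : ∀ j ∈ J, 0 ≤ w j) (θ : ι → ℝ) {ε : ℝ} (hε : 0 < ε) :
    ∃ δ > 0, ∀ (Θ : ι → ℝ) (k : ι → ℤ), (∀ j, |Θ j - k j - θ j| < δ) →
      ∑ j ∈ J, upperFract (Θ j) * w j < ∑ j ∈ J, upperFract (θ j) * w j + ε := by
  have husc : UpperSemicontinuousAt (fun Θ : ι → ℝ => ∑ j ∈ J, upperFract (Θ j) * w j) θ :=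
    upperSemicontinuousAt_sum fun j hj =>
      ((upperSemicontinuous_upperFract_mul (hw j hj)).comp (continuous_apply j)) θ
  obtain ⟨δ, hδ, h⟩ := Metric.eventually_nhds_iff.mp (husc _ (lt_add_of_pos_right _ hε))
  refine ⟨δ, hδ, fun Θ k hΘ => ?_⟩
  have := @h (fun j => Θ j - k j) ((dist_pi_lt_iff hδ).mpr fun j => by
    rw [Real.dist_eq]; exact hΘ j)
  simpa only [upperFract_sub_intCast] using this

lemma exists_abs_sub_le_norm_zsmul_lt {E : Type*} [SeminormedAddCommGroup E] [CompactSpace E]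
    (g : E) {δ : ℝ} (hδ : 0 < δ) : ∃ G : ℕ, ∀ T : ℤ, ∃ N : ℤ, |N - T| ≤ G ∧ ‖N • g‖ < δ := by
  have hcover : closure (Set.range fun n : ℤ => n • g) ⊆ ⋃ n : ℤ, Metric.ball (n • g) δ :=
    fun y hy => by
      obtain ⟨_, ⟨n, rfl⟩, hn⟩ := Metric.mem_closure_iff.mp hy δ hδ
      exact Set.mem_iUnion.mpr ⟨n, hn⟩
  obtain ⟨t, ht⟩ := isClosed_closure.isCompact.elim_finite_subcover _
    (fun _ => Metric.isOpen_ball) hcover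
  refine ⟨t.sup Int.natAbs, fun T => ?_⟩
  obtain ⟨n, hn, hT⟩ := Set.mem_iUnion₂.mp (ht (subset_closure ⟨T, rfl⟩))
  refine ⟨T - n, ?_, by rwa [sub_smul, ← dist_eq_norm]⟩
  rw [sub_sub_cancel_left, abs_neg, ← Int.natCast_natAbs]
  exact_mod_cast le_sup (f := Int.natAbs) hn

/-- Bohr sets are syndetic. -/
lemma exists_int_near_forall_mul_near_int {ι : Type*} [Fintype ι] (x : ι → ℝ) {δ : ℝ}
    (hδ : 0 < δ) : ∃ G : ℝ, ∀ T : ℝ, ∃ N : ℤ, |N - T| ≤ G ∧ ∀ i, ∃ k : ℤ, |N * x i - k| < δ := by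
  obtain ⟨G, hG⟩ := exists_abs_sub_le_norm_zsmul_lt (fun i => (x i : UnitAddCircle)) hδ
  refine ⟨G + 1, fun T => ?_⟩
  obtain ⟨N, hN, hNx⟩ := hG ⌊T⌋
  refine ⟨N, ?_, fun i => ⟨round (N * x i), ?_⟩⟩
  · have hN' : |(N : ℝ) - ⌊T⌋| ≤ G := by exact_mod_cast hN
    have h1 := Int.floor_le T
    have h2 := Int.lt_floor_add_one T
    rw [abs_le] at hN' ⊢
    constructor <;> linarith [hN'.1, hN'.2]
  · have := (pi_norm_lt_iff hδ).mp hNx i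
    rwa [Pi.smul_apply, ← AddCircle.coe_zsmul, UnitAddCircle.norm_eq, zsmul_eq_mul] at this

lemma le_one_of_isAdmissible {ι : Type*} {J : Finset ι} {ξ w : ι → ℝ} (hξ : ∀ j ∈ J, 0 < ξ j)
    (hw : ∀ j ∈ J, 0 < w j) (h : IsAdmissible J ξ w) : ∀ j ∈ J, ξ j ≤ 1 := by
  by_contra! hgt
  obtain ⟨j, hj, hj1⟩ := hgt
  have hlt := sum_lt_sum
    (fun i hi => mul_le_mul_of_nonneg_right (upperFract_le_self (hξ i hi)) (hw i hi).le)
    ⟨j, hj, mul_lt_mul_of_pos_right (upperFract_lt_self hj1) (hw j hj)⟩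
  have h1 := h 1
  simp only [Int.cast_one, one_mul] at h1
  linarith

lemma IsAdmissible.of_forall_one_le {ι : Type*} [Fintype ι] {J : Finset ι} {x w : ι → ℝ}
    (hw : ∀ j ∈ J, 0 ≤ w j)
    (h : ∀ m : ℤ, 1 ≤ m → ∑ j ∈ J, x j * w j ≤ ∑ j ∈ J, upperFract (m * x j) * w j) :
    IsAdmissible J x w := by
  intro m
  refine le_of_forall_pos_le_add fun ε hε => ?_
  obtain ⟨δ, hδ, hF⟩ := exists_forall_sum_upperFract_lt hw (fun j => m * x j) hε
  obtain ⟨G, hG⟩ := exists_int_near_forall_mul_near_int x hδ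
  obtain ⟨N, hNT, hN⟩ := hG (G + 1 - m)
  choose k hk using hN
  have hmN : 1 ≤ m + N := by
    have : (1 : ℝ) ≤ m + N := by linarith [(abs_le.mp hNT).1]
    exact_mod_cast this
  calc ∑ j ∈ J, x j * w j ≤ ∑ j ∈ J, upperFract ((m + N : ℤ) * x j) * w j := h _ hmN
    _ ≤ ∑ j ∈ J, upperFract (m * x j) * w j + ε :=
      (hF _ k fun j => by convert hk j using 2; push_cast; ring).le

lemma tendsto_sum_mul {α ι : Type*} [Fintype ι] {l : Filter α} {x a : α → ι → ℝ} {X w : ι → ℝ}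
    (hxX : Tendsto x l (𝓝 X)) (haw : Tendsto a l (𝓝 w)) :
    Tendsto (fun t => ∑ i, x t i * a t i) l (𝓝 (∑ i, X i * w i)) :=
  tendsto_finsetSum _ fun i _ => (tendsto_pi_nhds.mp hxX i).mul (tendsto_pi_nhds.mp haw i)

lemma sum_le_sum_upperFract_of_tendsto {α ι : Type*} [Fintype ι] {l : Filter α} [l.NeBot]
    {x a : α → ι → ℝ} {X w : ι → ℝ} (hx : ∀ t i, 0 < x t i) (ha : ∀ t i, a t i ∈ Set.Icc 0 1)
    (hadm : ∀ t, IsAdmissible univ (x t) (a t)) (hxX : Tendsto x l (𝓝 X))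
    (haw : Tendsto a l (𝓝 w)) (hconst : ∀ i, 0 < w i → ∀ᶠ t in l, a t i = w i)
    {m : ℤ} (hm : 1 ≤ m) :
    ∑ i, X i * w i ≤
      ∑ i ∈ univ.filter (fun i => 0 < w i ∧ 0 < X i), upperFract (m * X i) * w i := by
  have hm' : (0 : ℝ) < m := by exact_mod_cast hm
  have hmx : ∀ i, Tendsto (fun t => m * x t i) l (𝓝 (m * X i)) :=
    fun i => (tendsto_pi_nhds.mp hxX i).const_mul _
  rw [sum_filter]
  refine le_sum_of_forall_eventually_lt (tendsto_sum_mul hxX haw)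
    (Eventually.of_forall fun t => hadm t m) fun i _ ε hε => ?_
  split_ifs with hi
  · filter_upwards [(hmx i).eventually (upperSemicontinuous_upperFract_mul hi.1.le (m * X i) _
      (lt_add_of_pos_right _ hε)), hconst i hi.1] with t h1 h2
    rwa [h2]
  -- such a coordinate contributes at most `min (a t i) (m * x t i) → 0`
  rw [zero_add]
  rcases not_and_or.mp hi with hw0 | hX0
  · filter_upwards [(tendsto_pi_nhds.mp haw i).eventually_lt_const (hε.trans_le' (not_lt.mp hw0))]
      with t ht
    calc upperFract (m * x t i) * a t i ≤ 1 * a t i :=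
          mul_le_mul_of_nonneg_right (upperFract_le_one _) (ha t i).1
      _ < ε := by rwa [one_mul]
  · have hmX : m * X i < ε := by nlinarith [not_lt.mp hX0]
    filter_upwards [(hmx i).eventually_lt_const hmX] with t ht
    calc upperFract (m * x t i) * a t i ≤ m * x t i * 1 :=
          mul_le_mul (upperFract_le_self (by have := hx t i; positivity)) (ha t i).2
            (ha t i).1 (by have := hx t i; positivity)
      _ < ε := by rwa [mul_one]

lemma abs_intCast_mul_add_mul_sub_lt {X c u U τ G δ : ℝ} {m N k : ℤ} (hc : 0 < c)
    (hN : |N - (τ / c - m)| ≤ G) (hk : |N * X - k| < δ / 2)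
    (hu : G * c * |u| + |τ| * |u - U| < δ / 2) :
    |(m + N : ℤ) * (X + c * u) - k - (m * X + τ * U)| < δ := by
  have hcN : |(m + N) * c - τ| ≤ G * c := by
    have : (m + N) * c - τ = (N - (τ / c - m)) * c := by field_simp; ring
    rw [this, abs_mul, abs_of_pos hc]
    exact mul_le_mul_of_nonneg_right hN hc.le
  have hsplit : (m + N : ℤ) * (X + c * u) - k - (m * X + τ * U)
      = (N * X - k) + ((m + N) * c - τ) * u + τ * (u - U) := by push_cast; ring
  calc |(m + N : ℤ) * (X + c * u) - k - (m * X + τ * U)|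
      ≤ |N * X - k| + |(m + N) * c - τ| * |u| + |τ| * |u - U| := by
        rw [hsplit, ← abs_mul, ← abs_mul]; exact abs_add_three _ _ _
    _ ≤ |N * X - k| + G * c * |u| + |τ| * |u - U| := by gcongr
    _ < δ := by linarith

/-- Use the inequality of `x t` for `m + N`, where `N * X` is close to an integer vector and
`(m + N) * c t` is close to `τ`. -/
lemma le_sum_upperFract_add_smul {α ι : Type*} [Fintype ι] {l : Filter α} [l.NeBot]
    {x a u : α → ι → ℝ} {c : α → ℝ} {X w U : ι → ℝ} (hw : ∀ i, 0 ≤ w i)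
    (hadm : ∀ t, IsAdmissible univ (x t) (a t)) (ha : ∀ᶠ t in l, a t = w)
    (hc : ∀ᶠ t in l, 0 < c t) (hc0 : Tendsto c l (𝓝 0)) (hu : Tendsto u l (𝓝 U))
    (hxu : ∀ᶠ t in l, x t = X + c t • u t) (m : ℤ) (τ : ℝ) :
    ∑ i, X i * w i ≤ ∑ i, upperFract (m * X i + τ * U i) * w i := by
  refine le_of_forall_pos_lt_add fun ε hε => ?_
  obtain ⟨δ, hδ, hF⟩ := exists_forall_sum_upperFract_lt (J := univ) (fun i _ => hw i)
    (fun i => m * X i + τ * U i) (half_pos hε)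
  obtain ⟨G, hG⟩ := exists_int_near_forall_mul_near_int X (half_pos hδ)
  have hxX : Tendsto x l (𝓝 X) := by
    have := tendsto_const_nhds (x := X).add (hc0.smul hu)
    rw [zero_smul, add_zero] at this
    exact this.congr' (hxu.mono fun t h => h.symm)
  have hval : ∀ᶠ t in l, ∑ i, X i * w i - ε / 2 < ∑ i, x t i * a t i :=
    (tendsto_sum_mul hxX (tendsto_const_nhds.congr' (ha.mono fun t h => h.symm))).eventually
      (lt_mem_nhds (by linarith))
  have herr : ∀ᶠ t in l, ∀ i, G * c t * |u t i| + |τ| * |u t i - U i| < δ / 2 := by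
    refine eventually_all.mpr fun i => ?_
    have hui := tendsto_pi_nhds.mp hu i
    have := ((hc0.const_mul G).mul hui.abs).add ((hui.sub_const (U i)).abs.const_mul |τ|)
    simp only [mul_zero, zero_mul, sub_self, abs_zero, add_zero] at this
    exact this.eventually_lt_const (half_pos hδ)
  obtain ⟨t, hta, htc, hterr, htval, htx⟩ := (ha.and (hc.and (herr.and (hval.and hxu)))).exists
  obtain ⟨N, hNT, hN⟩ := hG (τ / c t - m)
  choose k hk using hN
  have hclose : ∀ i, |(m + N : ℤ) * x t i - k i - (m * X i + τ * U i)| < δ := fun i => by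
    simpa only [htx, Pi.add_apply, Pi.smul_apply, smul_eq_mul] using
      abs_intCast_mul_add_mul_sub_lt htc hNT (hk i) (hterr i)
  calc ∑ i, X i * w i < ∑ i, x t i * a t i + ε / 2 := by linarith
    _ ≤ ∑ i, upperFract ((m + N : ℤ) * x t i) * w i + ε / 2 := by
        rw [← hta]; linarith [hadm t (m + N)]
    _ < ∑ i, upperFract (m * X i + τ * U i) * w i + ε / 2 + ε / 2 := by
        linarith [hF _ k hclose]
    _ = ∑ i, upperFract (m * X i + τ * U i) * w i + ε := by ring

lemma sum_mul_eq_zero_of_forall_le_sum_upperFract {ι : Type*} [Fintype ι] {X w U : ι → ℝ}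
    (hX : ∀ i, 0 < X i) (hw : ∀ i, 0 ≤ w i)
    (h : ∀ τ : ℝ, ∑ i, X i * w i ≤ ∑ i, upperFract (X i + τ * U i) * w i) :
    ∑ i, U i * w i = 0 := by
  set S := ∑ i, U i * w i
  have hpos : ∀ᶠ τ in 𝓝 (0 : ℝ), ∀ i, 0 < X i + τ * U i := eventually_all.mpr fun i => by
    have : Tendsto (fun τ : ℝ => X i + τ * U i) (𝓝 0) (𝓝 (X i + 0 * U i)) :=
      tendsto_const_nhds.add (tendsto_id.mul_const _)
    rw [zero_mul, add_zero] at this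
    exact this.eventually_const_lt (hX i)
  -- for small `τ` the arguments are positive, so `upperFract` lies below them and `0 ≤ τ * S`
  have hmin : IsLocalMin (fun τ => τ * S) 0 := by
    filter_upwards [hpos] with τ hτ
    have hle : ∑ i, upperFract (X i + τ * U i) * w i ≤ ∑ i, (X i + τ * U i) * w i :=
      sum_le_sum fun i _ => mul_le_mul_of_nonneg_right (upperFract_le_self (hτ i)) (hw i)
    have hexp : ∑ i, (X i + τ * U i) * w i = ∑ i, X i * w i + τ * S := by
      rw [mul_sum, ← sum_add_distrib]; exact sum_congr rfl fun i _ => by ring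
    linarith [h τ]
  simpa using hmin.hasDerivAt_eq_zero ((hasDerivAt_id (0 : ℝ)).mul_const S)

lemma exists_pos_of_sum_mul_eq_zero {ι : Type*} [Fintype ι] {U w : ι → ℝ} (hw : ∀ i, 0 < w i)
    (hU : U ≠ 0) (hS : ∑ i, U i * w i = 0) : ∃ i, 0 < U i := by
  by_contra! hP
  refine hU (funext fun i => ?_)
  have := (sum_eq_zero_iff_of_nonpos fun i _ =>
    mul_nonpos_of_nonpos_of_nonneg (hP i) (hw i).le).mp hS i (mem_univ i)
  simpa [(hw i).ne'] using this

lemma exists_sub_mul_nonneg {ι : Type*} [Fintype ι] {X U : ι → ℝ} (hX : ∀ i, 0 < X i)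
    (hU : ∃ i, 0 < U i) :
    ∃ t : ℝ, (∃ j, X j - t * U j = 0) ∧
      ∀ i, 0 ≤ X i - t * U i ∧ (X i - t * U i = 0 → 0 < U i) := by
  obtain ⟨j₀, hj₀, hmin⟩ := exists_min_image (univ.filter fun i => 0 < U i) (fun j => X j / U j)
    (by simpa [filter_nonempty_iff] using hU)
  have hUj₀ : 0 < U j₀ := (mem_filter.mp hj₀).2
  have ht₀ : 0 < X j₀ / U j₀ := div_pos (hX j₀) hUj₀
  refine ⟨X j₀ / U j₀, ⟨j₀, by field_simp; ring⟩, fun i => ?_⟩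
  by_cases hUi : 0 < U i
  · have := hmin i (mem_filter.mpr ⟨mem_univ i, hUi⟩)
    rw [le_div_iff₀ hUi] at this
    exact ⟨by linarith, fun _ => hUi⟩
  · have : X j₀ / U j₀ * U i ≤ 0 := mul_nonpos_of_nonneg_of_nonpos ht₀.le (not_lt.mp hUi)
    have := hX i
    exact ⟨by linarith, fun _ => by linarith⟩

lemma le_sum_filter_upperFract_of_forall_le {ι : Type*} [Fintype ι] {ξ w U : ι → ℝ}
    (hw : ∀ i, 0 ≤ w i) (hξ : ∀ i, 0 ≤ ξ i ∧ (ξ i = 0 → 0 < U i)) {m : ℤ} {r : ℝ}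
    (h : ∀ τ : ℝ, r ≤ ∑ i, upperFract (m * ξ i + τ * U i) * w i) :
    r ≤ ∑ i ∈ univ.filter (fun i => 0 < ξ i), upperFract (m * ξ i) * w i := by
  rw [sum_filter]
  -- as `τ → 0⁺`, the coordinates with `ξ i = 0` contribute `upperFract (τ * U i) * w i → 0`
  refine le_sum_of_forall_eventually_lt (l := 𝓝[>] 0) tendsto_const_nhds
    (Eventually.of_forall h) fun i _ ε hε => ?_
  split_ifs with hi
  · have hlin : Tendsto (fun τ : ℝ => m * ξ i + τ * U i) (𝓝 0) (𝓝 (m * ξ i + 0 * U i)) :=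
      tendsto_const_nhds.add (tendsto_id.mul_const _)
    rw [zero_mul, add_zero] at hlin
    exact (hlin.mono_left nhdsWithin_le_nhds).eventually
      (upperSemicontinuous_upperFract_mul (hw i) _ _ (lt_add_of_pos_right _ hε))
  have hξi : ξ i = 0 := le_antisymm (not_lt.mp hi) (hξ i).1
  have hUi := (hξ i).2 hξi
  have hsmall : Tendsto (fun τ : ℝ => τ * U i * w i) (𝓝 0) (𝓝 (0 * U i * w i)) :=
    (tendsto_id.mul_const _).mul_const _
  rw [zero_mul, zero_mul] at hsmall
  filter_upwards [self_mem_nhdsWithin, (hsmall.mono_left nhdsWithin_le_nhds).eventually_lt_const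
    (show (0 : ℝ) < 0 + ε by linarith)] with τ (hτ : 0 < τ) hlt
  rw [hξi, mul_zero, zero_add]
  exact (mul_le_mul_of_nonneg_right (upperFract_le_self (mul_pos hτ hUi)) (hw i)).trans_lt hlt

/-- Moving from `X` along `-U` until a first coordinate vanishes gives an admissible point
with the same value in fewer coordinates. -/
lemma exists_isAdmissible_of_forall_le_sum_upperFract {ι : Type*} [Fintype ι] {X w U : ι → ℝ}
    (hX : ∀ i, 0 < X i) (hw : ∀ i, 0 < w i) (hU : U ≠ 0)
    (h : ∀ (m : ℤ) (τ : ℝ), ∑ i, X i * w i ≤ ∑ i, upperFract (m * X i + τ * U i) * w i) :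
    ∃ J : Finset ι, J ≠ univ ∧ ∃ ξ : ι → ℝ, (∀ j ∈ J, 0 < ξ j) ∧ IsAdmissible J ξ w ∧
      ∑ j ∈ J, ξ j * w j = ∑ i, X i * w i := by
  have hS : ∑ i, U i * w i = 0 := sum_mul_eq_zero_of_forall_le_sum_upperFract hX
    (fun i => (hw i).le) fun τ => by simpa using h 1 τ
  obtain ⟨t₀, ⟨j₀, hj₀⟩, hξ⟩ := exists_sub_mul_nonneg hX (exists_pos_of_sum_mul_eq_zero hw hU hS)
  set ξ : ι → ℝ := fun i => X i - t₀ * U i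
  have hval : ∑ i ∈ univ.filter (fun i => 0 < ξ i), ξ i * w i = ∑ i, X i * w i := by
    rw [sum_filter_of_ne fun i _ hi => (hξ i).1.lt_of_ne' (left_ne_zero_of_mul hi)]
    simp only [sub_mul, sum_sub_distrib, mul_assoc, ← mul_sum, hS, mul_zero, sub_zero]
  refine ⟨univ.filter fun i => 0 < ξ i, fun hJ => ?_, ξ, fun j hj => (mem_filter.mp hj).2,
    fun m => ?_, hval⟩
  · exact (mem_filter.mp (hJ ▸ mem_univ j₀)).2.ne' hj₀
  rw [hval]
  exact le_sum_filter_upperFract_of_forall_le (fun i => (hw i).le) hξ fun τ => by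
    convert h m (τ - m * t₀) using 4 with i; ring

lemma exists_ne_zero_forall_le_sum_upperFract_add_smul {α ι : Type*} [Fintype ι] {l : Filter α}
    [l.NeBot] {x a : α → ι → ℝ} {X w : ι → ℝ} (hw : ∀ i, 0 ≤ w i)
    (hadm : ∀ t, IsAdmissible univ (x t) (a t)) (ha : ∀ᶠ t in l, a t = w)
    (hxX : Tendsto x l (𝓝 X)) (hne : ∀ᶠ t in l, x t ≠ X) :
    ∃ U : ι → ℝ, U ≠ 0 ∧
      ∀ (m : ℤ) (τ : ℝ), ∑ i, X i * w i ≤ ∑ i, upperFract (m * X i + τ * U i) * w i := by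
  set c := fun t => ‖x t - X‖
  set u := fun t => (c t)⁻¹ • (x t - X)
  have hc : ∀ᶠ t in l, 0 < c t := hne.mono fun t h => norm_pos_iff.mpr (sub_ne_zero.mpr h)
  have hsphere : ∀ᶠ t in l, u t ∈ Metric.sphere 0 1 := hc.mono fun t h => by
    rw [mem_sphere_zero_iff_norm, norm_smul, norm_inv, Real.norm_of_nonneg h.le]
    exact inv_mul_cancel₀ h.ne'
  obtain ⟨L, hL, U, hU, huU⟩ := exists_ultrafilter_le_tendsto (isCompact_sphere 0 1) hsphere
  refine ⟨U, ne_zero_of_mem_unit_sphere ⟨U, hU⟩, fun m τ => ?_⟩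
  exact le_sum_upperFract_add_smul hw hadm (ha.filter_mono hL) (hc.filter_mono hL)
    ((tendsto_iff_norm_sub_tendsto_zero.mp hxX).mono_left hL) huU
    ((hc.filter_mono hL).mono fun t h => by
      rw [smul_inv_smul₀ h.ne', add_sub_cancel]) m τ

theorem exists_isAdmissible_of_tendsto {α ι : Type*} [Fintype ι] {l : Filter α} [l.NeBot]
    {x a : α → ι → ℝ} {X w : ι → ℝ} (hx : ∀ t i, 0 < x t i) (ha : ∀ t i, a t i ∈ Set.Icc 0 1)
    (hadm : ∀ t, IsAdmissible univ (x t) (a t)) (hxX : Tendsto x l (𝓝 X))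
    (haw : Tendsto a l (𝓝 w)) (hconst : ∀ i, 0 < w i → ∀ᶠ t in l, a t i = w i)
    (hne : ∀ t, ∑ i, x t i * a t i ≠ ∑ i, X i * w i) :
    ∃ J : Finset ι, J ≠ univ ∧ ∃ ξ : ι → ℝ, (∀ j ∈ J, 0 < ξ j ∧ 0 < w j) ∧
      IsAdmissible J ξ w ∧ ∑ j ∈ J, ξ j * w j = ∑ i, X i * w i := by
  have hw : ∀ i, 0 ≤ w i := fun i => ge_of_tendsto' (tendsto_pi_nhds.mp haw i) fun t => (ha t i).1
  by_cases hfull : ∀ i, 0 < w i ∧ 0 < X i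
  · have ha' : ∀ᶠ t in l, a t = w :=
      (eventually_all.mpr fun i => hconst i (hfull i).1).mono fun t h => funext h
    obtain ⟨U, hU, hkey⟩ := exists_ne_zero_forall_le_sum_upperFract_add_smul hw hadm ha' hxX
      (ha'.mono fun t h hxt => hne t (by rw [hxt, h]))
    obtain ⟨J, hJ, ξ, hξ, hadmJ, hval⟩ := exists_isAdmissible_of_forall_le_sum_upperFract
      (fun i => (hfull i).2) (fun i => (hfull i).1) hU hkey
    exact ⟨J, hJ, ξ, fun j hj => ⟨hξ j hj, (hfull j).1⟩, hadmJ, hval⟩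
  have hX : ∀ i, 0 ≤ X i := fun i => ge_of_tendsto' (tendsto_pi_nhds.mp hxX i) fun t => (hx t i).le
  have hval : ∑ i ∈ univ.filter (fun i => 0 < w i ∧ 0 < X i), X i * w i = ∑ i, X i * w i :=
    sum_filter_of_ne fun i _ hi =>
      ⟨(hw i).lt_of_ne' (right_ne_zero_of_mul hi), (hX i).lt_of_ne' (left_ne_zero_of_mul hi)⟩
  refine ⟨univ.filter fun i => 0 < w i ∧ 0 < X i,
    fun hP => hfull fun i => filter_eq_self.mp hP i (mem_univ i), X, fun j hj => (mem_filter.mp hj).2.symm, ?_, hval⟩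
  refine IsAdmissible.of_forall_one_le (fun j _ => hw j) fun m hm => ?_
  rw [hval]
  exact sum_le_sum_upperFract_of_tendsto hx ha hadm hxX haw hconst hm

lemma mem_vtildeValues_of_mem_accPts {A : Set ℝ} (hA : A ⊆ Set.Icc 0 1)
    (hacc : ∀ r : ℝ, 0 < r → r ∉ accPts A) {d : ℕ} {r : ℝ} (hr : r ∈ accPts (vtildeValues d A))
    (hr0 : r ≠ 0) : ∃ d', 1 ≤ d' ∧ d' ≤ d - 1 ∧ r ∈ vtildeValues d' A := by
  obtain ⟨s, hs, hlim⟩ := exists_seq_tendsto_of_mem_accPts hr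
  choose p hp hps using fun n => (hs n).1
  have hmem := fun n => mem_Vtilde_iff.mp (hp n)
  have hbox : ∀ n, p n ∈ Set.Icc 0 1 := fun n =>
    ⟨⟨fun i => ((hmem n).1 i).1.le, fun i => (hA ((hmem n).2.1 i)).1⟩,
      ⟨fun i => ((hmem n).1 i).2, fun i => (hA ((hmem n).2.1 i)).2⟩⟩
  obtain ⟨L, hL, ⟨X, w⟩, -, hpL⟩ :=
    exists_ultrafilter_le_tendsto isCompact_Icc (Eventually.of_forall (f := atTop) hbox)
  have hxX : Tendsto (fun n => (p n).1) L (𝓝 X) := (continuous_fst.tendsto _).comp hpL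
  have haw : Tendsto (fun n => (p n).2) L (𝓝 w) := (continuous_snd.tendsto _).comp hpL
  have hconst : ∀ i, 0 < w i → ∀ᶠ n in L, (p n).2 i = w i := fun i hwi =>
    eventually_eq_of_tendsto_of_notMem_accPts (fun n => (hmem n).2.1 i)
      (tendsto_pi_nhds.mp haw i) (hacc _ hwi)
  have hrX : r = ∑ i, X i * w i :=
    tendsto_nhds_unique ((hlim.mono_left hL).congr hps) (tendsto_sum_mul hxX haw)
  obtain ⟨J, hJ, ξ, hξw, hadm, hval⟩ := exists_isAdmissible_of_tendsto (l := ↑L)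
    (fun n i => ((hmem n).1 i).1) (fun n i => hA ((hmem n).2.1 i)) (fun n => (hmem n).2.2)
    hxX haw hconst fun n => by rw [← hps n, ← hrX]; exact (hs n).2
  have hJne : J.Nonempty := nonempty_iff_ne_empty.mpr fun h => hr0 (by simp [hrX, ← hval, h])
  have hξ1 := le_one_of_isAdmissible (fun j hj => (hξw j hj).1) (fun j hj => (hξw j hj).2) hadm
  have hwA : ∀ j ∈ J, w j ∈ A := fun j hj => by
    obtain ⟨n, hn⟩ := (hconst j (hξw j hj).2).exists
    exact hn ▸ (hmem n).2.1 j
  refine ⟨J.card, card_pos.mpr hJne, ?_, ?_⟩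
  · have := card_lt_card (ssubset_univ_iff.mpr hJ)
    rw [card_univ, Fintype.card_fin] at this
    omega
  · rw [hrX, ← hval]
    exact sum_mul_mem_vtildeValues_card (fun j hj => ⟨(hξw j hj).1, hξ1 j hj⟩) hwA hadm

open Finset in
/-- if `A` has no positive accumulation points, then the set of
accumulation points of `{⟨x,a⟩ : (x,a) ∈ Ṽ_d(A)}` equals
`{0} ∪ ⋃_{1 ≤ d' ≤ d-1} {⟨x,a⟩ : (x,a) ∈ Ṽ_{d'}(A)}`. -/
theorem toric_mld_stmt13 (A : Set ℝ) (hA : A ⊆ Set.Icc 0 1) (h1 : (1:ℝ) ∈ A)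
    (hacc : ∀ r : ℝ, 0 < r → r ∉ accPts A) (d : ℕ) (hd : 1 ≤ d) :
    accPts {r : ℝ | ∃ p ∈ Vtilde d A, r = ∑ i, p.1 i * p.2 i} =
    {0} ∪ {r : ℝ | ∃ d', 1 ≤ d' ∧ d' ≤ d - 1 ∧
      ∃ p ∈ Vtilde d' A, r = ∑ i, p.1 i * p.2 i} := by
  change accPts (vtildeValues d A) = {0} ∪ {r | ∃ d', 1 ≤ d' ∧ d' ≤ d - 1 ∧ r ∈ vtildeValues d' A}
  ext r
  constructor
  · intro hr
    by_cases hr0 : r = 0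
    · exact Or.inl hr0
    · exact Or.inr (mem_vtildeValues_of_mem_accPts hA hacc hr hr0)
  · rintro (rfl | ⟨d', -, hd', hr⟩)
    · exact mem_accPts_vtildeValues h1 hd (zero_mem_vtildeValues_zero A)
    · exact mem_accPts_vtildeValues h1 (by omega) hr
end
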